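/- arXiv:1609.00215 — 5 statements merged into one kernel-verified Lean document; each statement's English description precedes it below -/
import Mathlib

section
/- Lemma 3.3: Let x ∈ D([0,T]) and a < b be such that N = N^{a,b}(x) is finite and N ≥ 2. Then there exists A ∈ 𝔸 such that ∫_0^T x(t) dA(t) ≥ b − a, ‖A‖(T) = 2, and ‖A‖_∞ = 1/(N − 1). -/
open MeasureTheory Filter Set Topology

noncomputable section

/-- `x` is càdlàg on `[0,T]`: right-continuous at every `t ∈ [0,T)` and
admitting a left limit at every `t ∈ (0,T]`. -/
def Cadlag (T : ℝ) (x : ℝ → ℝ) : Prop :=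
  (∀ t ∈ Set.Ico (0:ℝ) T, Filter.Tendsto x (nhdsWithin t (Set.Ioi t)) (nhds (x t))) ∧
  (∀ t ∈ Set.Ioc (0:ℝ) T, ∃ L : ℝ, Filter.Tendsto x (nhdsWithin t (Set.Iio t)) (nhds L))

/-- membership in `𝕍`: càdlàg of finite total variation on `[0,T]`. -/
def MemV (T : ℝ) (v : ℝ → ℝ) : Prop :=
  Cadlag T v ∧ BoundedVariationOn v (Set.Icc 0 T)

/-- `μ` is the finite signed (Lebesgue–Stieltjes) measure induced by `v` on `[0,T]`:
`μ([0,t]) = v(t)` for `t ∈ [0,T]`, and `μ` vanishes outside `[0,T]`. -/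
def Represents (T : ℝ) (μ : MeasureTheory.SignedMeasure ℝ) (v : ℝ → ℝ) : Prop :=
  (∀ t ∈ Set.Icc (0:ℝ) T, μ (Set.Icc 0 t) = v t) ∧
  (∀ s : Set ℝ, MeasurableSet s → s ∩ Set.Icc (0:ℝ) T = ∅ → μ s = 0)

/-- Integral of `f` against a signed measure. -/
noncomputable def sInt (μ : MeasureTheory.SignedMeasure ℝ) (f : ℝ → ℝ) : ℝ :=
  (∫ t, f t ∂μ.toJordanDecomposition.posPart) - (∫ t, f t ∂μ.toJordanDecomposition.negPart)

/-- `∫_{[0,T]} f dv` : integral of `f` with respect to the Lebesgue–Stieltjes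
signed measure induced by `v` on `[0,T]`. -/
noncomputable def intD (T : ℝ) (f v : ℝ → ℝ) : ℝ :=
  letI := Classical.propDecidable (∃ μ : MeasureTheory.SignedMeasure ℝ, Represents T μ v)
  if h : ∃ μ : MeasureTheory.SignedMeasure ℝ, Represents T μ v then sInt h.choose f else 0

/-- S-convergence `x_n →_S x₀` on `D([0,T])`. -/
def SConv (T : ℝ) (x : ℕ → ℝ → ℝ) (x₀ : ℝ → ℝ) : Prop :=
  ∀ ε > (0:ℝ), ∃ v : ℕ → ℝ → ℝ, ∃ v₀ : ℝ → ℝ,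
    (∀ n, MemV T (v n)) ∧ MemV T v₀ ∧
    (∀ n, ∀ t ∈ Set.Icc (0:ℝ) T, |x n t - v n t| ≤ ε) ∧
    (∀ t ∈ Set.Icc (0:ℝ) T, |x₀ t - v₀ t| ≤ ε) ∧
    (∀ f : ℝ → ℝ, Continuous f →
      Filter.Tendsto (fun n => intD T f (v n)) Filter.atTop (nhds (intD T f v₀)))

/-- `x_n ⇒*_S x₀` : every subsequence contains a further subsequence `→_S`-converging to `x₀`. -/
def SStarConv (T : ℝ) (x : ℕ → ℝ → ℝ) (x₀ : ℝ → ℝ) : Prop :=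
  ∀ φ : ℕ → ℕ, StrictMono φ →
    ∃ ψ : ℕ → ℕ, StrictMono ψ ∧ SConv T (fun k => x (φ (ψ k))) x₀

/-- membership in `𝔸([0,T])`: continuous, of finite variation, vanishing at `0`. -/
def MemA (T : ℝ) (A : ℝ → ℝ) : Prop :=
  ContinuousOn A (Set.Icc 0 T) ∧ BoundedVariationOn A (Set.Icc 0 T) ∧ A 0 = 0

/-- `A_n →_τ A₀` : uniform convergence on `[0,T]` together with uniformly bounded
total variations. -/
def TauConv (T : ℝ) (A : ℕ → ℝ → ℝ) (A₀ : ℝ → ℝ) : Prop :=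
  TendstoUniformlyOn (fun n => A n) A₀ Filter.atTop (Set.Icc 0 T) ∧
  ∃ M : ℝ, ∀ n, eVariationOn (A n) (Set.Icc 0 T) ≤ ENNReal.ofReal M

/-- `x` has (at least) `k` up-crossings of the levels `a < b` on `[0,T]`. -/
def HasUpcrossings (T a b : ℝ) (x : ℝ → ℝ) (k : ℕ) : Prop :=
  ∃ s u : Fin k → ℝ, (∀ i, 0 ≤ s i ∧ s i < u i ∧ u i ≤ T) ∧
    (∀ i j : Fin k, i < j → u i < s j) ∧
    (∀ i, x (s i) < a ∧ b < x (u i))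

/-- `x` has (at least) `k` `η`-oscillations on `[0,T]`. -/
def HasOscillations (T η : ℝ) (x : ℝ → ℝ) (k : ℕ) : Prop :=
  ∃ s u : Fin k → ℝ, (∀ i, 0 ≤ s i ∧ s i < u i ∧ u i ≤ T) ∧
    (∀ i j : Fin k, i < j → u i ≤ s j) ∧
    (∀ i, |x (u i) - x (s i)| > η)

/-!
Between consecutive up-crossings `x` falls from above `b` to below `a`, which gives `n = N - 1`
down-crossings `p 0 < q 0 < p 1 < ⋯ < q (n - 1)` with `b < x (p i)` and `x (q i) < a`. By
right-continuity, for small `δ` the function `x` stays above `b` on `[p i, p i + δ)` and below `a`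
on `[q i, q i + δ)`. The integrator `A` rises linearly by `c = 1 / n` on each `[p i, p i + δ]` and
falls back by `c` on each `[q i, q i + δ]`: then `0 ≤ A ≤ c`, its variation is `2 n c = 2`, and
`dA` is `c / δ` times Lebesgue measure on the first windows minus the same on the second ones,
so `∫ x dA ≥ n c (b - a) = b - a`.
-/

namespace MeasureTheory.SignedMeasure

theorem ext_of_Iic {μ ν : SignedMeasure ℝ} (h : ∀ c, μ (Iic c) = ν (Iic c)) : μ = ν := by
  set P := μ.toJordanDecomposition.posPart + ν.toJordanDecomposition.negPart
  set Q := ν.toJordanDecomposition.posPart + μ.toJordanDecomposition.negPart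
  have hsub : μ - ν = P.toSignedMeasure - Q.toSignedMeasure := by
    conv_lhs => rw [← μ.toSignedMeasure_toJordanDecomposition,
      ← ν.toSignedMeasure_toJordanDecomposition]
    simp only [P, Q, JordanDecomposition.toSignedMeasure, Measure.toSignedMeasure_add]
    abel
  have hPQ : P = Q := Measure.ext_of_Iic P Q fun c => by
    have hc := congrArg (· (Iic c)) hsub
    simp only [sub_apply, h c, sub_self,
      Measure.toSignedMeasure_apply_measurable measurableSet_Iic] at hc
    exact (measureReal_eq_measureReal_iff (measure_ne_top _ _) (measure_ne_top _ _)).1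
      (sub_eq_zero.1 hc.symm)
  rw [← sub_eq_zero, hsub]
  simp only [hPQ, sub_self]

end MeasureTheory.SignedMeasure

namespace Represents

variable {T : ℝ} {μ : SignedMeasure ℝ} {A : ℝ → ℝ}

theorem apply_eq_apply_inter (hμ : Represents T μ A) {s : Set ℝ} (hs : MeasurableSet s) :
    μ s = μ (s ∩ Icc 0 T) := by
  conv_lhs => rw [← Set.inter_union_sdiff s (Icc 0 T)]
  rw [VectorMeasure.of_union Set.disjoint_sdiff_inter.symm
    (hs.inter measurableSet_Icc) (hs.diff measurableSet_Icc),
    hμ.2 _ (hs.diff measurableSet_Icc) Set.sdiff_inter_self, add_zero]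

theorem unique {ν : SignedMeasure ℝ} (hμ : Represents T μ A) (hν : Represents T ν A) :
    μ = ν := by
  refine SignedMeasure.ext_of_Iic fun c => ?_
  have hIic : Iic c ∩ Icc 0 T = Icc 0 (min c T) := by
    ext t; simp only [mem_inter_iff, mem_Iic, mem_Icc, le_min_iff]; tauto
  rw [hμ.apply_eq_apply_inter measurableSet_Iic, hν.apply_eq_apply_inter measurableSet_Iic, hIic]
  by_cases hcT : 0 ≤ min c T
  · have ht : min c T ∈ Icc 0 T := ⟨hcT, min_le_right c T⟩
    rw [hμ.1 _ ht, hν.1 _ ht]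
  · rw [Icc_eq_empty hcT, VectorMeasure.empty, VectorMeasure.empty]

theorem intD_eq (hμ : Represents T μ A) (f : ℝ → ℝ) : intD T f A = sInt μ f := by
  have hex : ∃ ν : SignedMeasure ℝ, Represents T ν A := ⟨μ, hμ⟩
  rw [intD, dif_pos hex, hex.choose_spec.unique hμ]

end Represents

theorem sInt_toSignedMeasure_sub {P Q : Measure ℝ} [IsFiniteMeasure P] [IsFiniteMeasure Q]
    (hPQ : P ⟂ₘ Q) (f : ℝ → ℝ) :
    sInt (P.toSignedMeasure - Q.toSignedMeasure) f = ∫ t, f t ∂P - ∫ t, f t ∂Q := by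
  have hj : (P.toSignedMeasure - Q.toSignedMeasure).toJordanDecomposition = ⟨P, Q, hPQ⟩ := by
    rw [← JordanDecomposition.toJordanDecomposition_toSignedMeasure ⟨P, Q, hPQ⟩]
    rfl
  rw [sInt, hj]

theorem aemeasurable_restrict_of_tendsto_nhdsGT {x : ℝ → ℝ} {S : Set ℝ} (μ : Measure ℝ)
    (hS : MeasurableSet S) (hx : ∀ t ∈ S, Tendsto x (𝓝[>] t) (𝓝 (x t))) :
    AEMeasurable x (μ.restrict S) := by
  -- `y n t` is the first point of the grid `ℤ / (n + 1)` strictly to the right of `t`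
  set y : ℕ → ℝ → ℝ := fun n t => (⌊t * (n + 1)⌋ + 1) / (n + 1)
  have hy_meas (n : ℕ) : Measurable fun t => x (y n t) :=
    (measurable_from_top (f := fun k : ℤ => x ((k + 1) / (n + 1)))).comp
      (measurable_id.mul_const _).floor
  have hy_gt (n : ℕ) (t : ℝ) : t < y n t := by
    rw [lt_div_iff₀ (by positivity)]
    linarith [Int.lt_floor_add_one (t * (n + 1))]
  have hy_le (n : ℕ) (t : ℝ) : y n t ≤ t + 1 / (n + 1) := by
    rw [div_le_iff₀ (by positivity), add_mul, one_div_mul_cancel (by positivity)]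
    linarith [Int.floor_le (t * (n + 1))]
  have hy_lim (t : ℝ) : Tendsto (fun n => y n t) atTop (𝓝[>] t) := by
    refine tendsto_nhdsWithin_iff.2 ⟨?_, .of_forall fun n => hy_gt n t⟩
    have hupper := tendsto_const_nhds (x := t).add tendsto_one_div_add_atTop_nhds_zero_nat
    rw [add_zero] at hupper
    exact tendsto_of_tendsto_of_tendsto_of_le_of_le tendsto_const_nhds hupper
      (fun n => (hy_gt n t).le) (hy_le · t)
  refine aemeasurable_of_tendsto_metrizable_ae atTop (fun n => (hy_meas n).aemeasurable) ?_
  filter_upwards [ae_restrict_mem hS] with t ht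
  exact (hx t ht).comp (hy_lim t)

theorem eventually_forall_Ico_mem {x : ℝ → ℝ} {t : ℝ} {U : Set ℝ}
    (hx : Tendsto x (𝓝[>] t) (𝓝 (x t))) (hU : U ∈ 𝓝 (x t)) :
    ∀ᶠ δ in 𝓝[>] 0, ∀ s ∈ Ico t (t + δ), x s ∈ U := by
  obtain ⟨u, htu, hsub⟩ :=
    mem_nhdsGE_iff_exists_Ico_subset.1 (continuousWithinAt_Ioi_iff_Ici.1 hx hU)
  filter_upwards [nhdsWithin_le_nhds (eventually_lt_nhds (sub_pos.2 htu))] with δ hδ s hs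
  exact hsub ⟨hs.1, by linarith [hs.2]⟩

theorem eventually_add_le_of_lt {a b : ℝ} (h : a < b) :
    ∀ᶠ δ in 𝓝[>] (0 : ℝ), a + δ ≤ b := by
  filter_upwards [nhdsWithin_le_nhds (eventually_lt_nhds (sub_pos.2 h))] with δ hδ
  linarith

theorem integrableOn_of_tendsto_nhdsGT {x : ℝ → ℝ} {S : Set ℝ} {μ : Measure ℝ}
    (hS : MeasurableSet S) (hμS : μ S ≠ ⊤)
    (hx : ∀ t ∈ S, Tendsto x (𝓝[>] t) (𝓝 (x t))) {C₁ C₂ : ℝ} (hC : ∀ t ∈ S, x t ∈ Icc C₁ C₂) :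
    IntegrableOn x S μ := by
  refine .of_bound hμS.lt_top
    (aemeasurable_restrict_of_tendsto_nhdsGT μ hS hx).aestronglyMeasurable (max |C₁| |C₂|) ?_
  filter_upwards [ae_restrict_mem hS] with t ht
  exact abs_le_max_abs_abs (hC t ht).1 (hC t ht).2

theorem eVariationOn.sub_le_add {α E : Type*} [LinearOrder α] [SeminormedAddCommGroup E]
    (f g : α → E) (s : Set α) :
    eVariationOn (f - g) s ≤ eVariationOn f s + eVariationOn g s := by
  refine iSup_le fun ⟨m, u, hu, us⟩ => ?_
  calc ∑ i ∈ Finset.range m, edist ((f - g) (u (i + 1))) ((f - g) (u i))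
      ≤ ∑ i ∈ Finset.range m,
          (edist (f (u (i + 1))) (f (u i)) + edist (g (u (i + 1))) (g (u i))) := by
        refine Finset.sum_le_sum fun i _ => ?_
        simp only [Pi.sub_apply, edist_dist, ← ENNReal.ofReal_add dist_nonneg dist_nonneg]
        exact ENNReal.ofReal_le_ofReal (dist_sub_sub_le _ _ _ _)
    _ ≤ eVariationOn f s + eVariationOn g s := by
        rw [Finset.sum_add_distrib]
        exact add_le_add (eVariationOn.sum_le hu us) (eVariationOn.sum_le hu us)

theorem Antitone.sum_range_succ_sub_le {g : ℝ → ℝ} (hg : Antitone g) {a b : ℕ → ℝ}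
    {n : ℕ} (hba : ∀ i < n, b i ≤ a (i + 1)) :
    ∑ i ∈ Finset.range (n + 1), (g (a i) - g (b i)) ≤ g (a 0) - g (b n) := by
  induction n with
  | zero => simp
  | succ n ih =>
    rw [Finset.sum_range_succ]
    linarith [ih fun i hi => hba i (by omega), hg (hba n (by omega))]

def ramp (δ p t : ℝ) : ℝ := max (min t (p + δ) - p) 0

section Ramp

variable {δ p t : ℝ}

theorem continuous_ramp (δ p : ℝ) : Continuous (ramp δ p) := by
  unfold ramp; fun_prop

theorem monotone_ramp (δ p : ℝ) : Monotone (ramp δ p) := fun _ _ h =>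
  max_le_max_right _ (sub_le_sub_right (min_le_min_right _ h) _)

theorem antitone_ramp_left (δ t : ℝ) : Antitone fun p => ramp δ p t := fun p p' h => by
  simp only [ramp, ← min_sub_sub_right, add_sub_cancel_left]
  exact max_le_max_right _ (min_le_min_right _ (by linarith))

theorem ramp_nonneg : 0 ≤ ramp δ p t := le_max_right _ _

theorem ramp_le (hδ : 0 ≤ δ) : ramp δ p t ≤ δ :=
  max_le (by linarith [min_le_right t (p + δ)]) hδ

theorem ramp_of_le (h : t ≤ p) : ramp δ p t = 0 :=
  max_eq_right (by linarith [min_le_left t (p + δ)])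

theorem ramp_of_ge (hδ : 0 ≤ δ) (h : p + δ ≤ t) : ramp δ p t = δ := by
  rw [ramp, min_eq_right h, add_sub_cancel_left, max_eq_left hδ]

theorem volume_real_Icc_inter_Ico (hp : 0 ≤ p) :
    volume.real (Icc 0 t ∩ Ico p (p + δ)) = ramp δ p t := by
  rw [measureReal_congr ((ae_eq_refl (Icc 0 t)).inter Ico_ae_eq_Icc), Icc_inter_Icc,
    Real.volume_real_Icc, ramp, max_eq_right hp]

theorem eVariationOn_mul_sum_ramp {w T : ℝ} {r : ℕ → ℝ} {n : ℕ} (hw : 0 ≤ w)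
    (hδ : 0 ≤ δ) (hT : 0 ≤ T) (hr : ∀ i < n, 0 ≤ r i ∧ r i + δ ≤ T) :
    eVariationOn (fun t => w * ∑ i ∈ Finset.range n, ramp δ (r i) t) (Icc 0 T) =
      ENNReal.ofReal (w * (n * δ)) := by
  have hmono : Monotone fun t => w * ∑ i ∈ Finset.range n, ramp δ (r i) t := fun s t hst =>
    mul_le_mul_of_nonneg_left (Finset.sum_le_sum fun i _ => monotone_ramp δ (r i) hst) hw
  have hT_val : ∑ i ∈ Finset.range n, ramp δ (r i) T = n * δ := by
    rw [Finset.sum_congr rfl fun i hi => ramp_of_ge hδ (hr i (Finset.mem_range.1 hi)).2]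
    simp
  have h0_val : ∑ i ∈ Finset.range n, ramp δ (r i) 0 = 0 :=
    Finset.sum_eq_zero fun i hi => ramp_of_le (hr i (Finset.mem_range.1 hi)).1
  rw [← inter_self (Icc 0 T), (hmono.monotoneOn _).eVariationOn_eq (left_mem_Icc.2 hT)
    (right_mem_Icc.2 hT), hT_val, h0_val, mul_zero, sub_zero]

end Ramp

def windowMeasure (δ : ℝ) (p : ℕ → ℝ) (n : ℕ) : Measure ℝ :=
  ∑ i ∈ Finset.range n, volume.restrict (Ico (p i) (p i + δ))

section WindowMeasure

variable {δ T : ℝ} {p q : ℕ → ℝ} {n : ℕ}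

instance (δ : ℝ) (p : ℕ → ℝ) (n : ℕ) : IsFiniteMeasure (windowMeasure δ p n) := by
  unfold windowMeasure; infer_instance

theorem windowMeasure_apply {s : Set ℝ} (hs : MeasurableSet s) :
    windowMeasure δ p n s = ∑ i ∈ Finset.range n, volume (s ∩ Ico (p i) (p i + δ)) := by
  simp only [windowMeasure, Measure.finsetSum_apply, Measure.restrict_apply hs]

theorem windowMeasure_real_Icc (hp : ∀ i < n, 0 ≤ p i) (t : ℝ) :
    (windowMeasure δ p n).real (Icc 0 t) = ∑ i ∈ Finset.range n, ramp δ (p i) t := by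
  rw [measureReal_def, windowMeasure_apply measurableSet_Icc,
    ENNReal.toReal_sum fun i _ =>
      ((measure_mono inter_subset_right).trans_lt measure_Ico_lt_top).ne]
  refine Finset.sum_congr rfl fun i hi => ?_
  rw [← measureReal_def, volume_real_Icc_inter_Ico (hp i (Finset.mem_range.1 hi))]

theorem windowMeasure_eq_zero (hp : ∀ i < n, Ico (p i) (p i + δ) ⊆ Icc 0 T) {s : Set ℝ}
    (hs : MeasurableSet s) (hsT : s ∩ Icc 0 T = ∅) : windowMeasure δ p n s = 0 := by
  rw [windowMeasure_apply hs]
  refine Finset.sum_eq_zero fun i hi => measure_mono_null ?_ (measure_empty (μ := volume))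
  rw [← hsT]
  exact inter_subset_inter_right s (hp i (Finset.mem_range.1 hi))

theorem windowMeasure_mutuallySingular
    (h : ∀ i < n, ∀ j < n, Disjoint (Ico (p i) (p i + δ)) (Ico (q j) (q j + δ))) :
    windowMeasure δ p n ⟂ₘ windowMeasure δ q n := by
  refine Finset.sum_induction _ (· ⟂ₘ windowMeasure δ q n)
    (fun _ _ => Measure.MutuallySingular.add_left) .zero_left fun i hi =>
      Finset.sum_induction _ (_ ⟂ₘ ·) (fun _ _ => Measure.MutuallySingular.add_right)
        .zero_right fun j hj => ?_
  refine ⟨Ico (q j) (q j + δ), measurableSet_Ico, ?_, by simp⟩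
  rw [Measure.restrict_apply measurableSet_Ico,
    (h i (Finset.mem_range.1 hi) j (Finset.mem_range.1 hj)).symm.inter_eq, measure_empty]

theorem mul_le_integral_windowMeasure {x : ℝ → ℝ} {b : ℝ} (hδ : 0 ≤ δ)
    (hint : ∀ i < n, IntegrableOn x (Ico (p i) (p i + δ)))
    (hb : ∀ i < n, ∀ t ∈ Ico (p i) (p i + δ), b ≤ x t) :
    n * δ * b ≤ ∫ t, x t ∂windowMeasure δ p n := by
  rw [windowMeasure, integral_finsetSum_measure fun i hi => hint i (Finset.mem_range.1 hi)]
  calc (n : ℝ) * δ * b = ∑ i ∈ Finset.range n, b * volume.real (Ico (p i) (p i + δ)) := by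
        simp only [Real.volume_real_Ico, add_sub_cancel_left, max_eq_left hδ, Finset.sum_const,
          Finset.card_range, nsmul_eq_mul]
        ring
    _ ≤ _ := Finset.sum_le_sum fun i hi => setIntegral_ge_of_const_le_real measurableSet_Ico
        measure_Ico_lt_top.ne (hb i (Finset.mem_range.1 hi)) (hint i (Finset.mem_range.1 hi))

end WindowMeasure

structure WindowChain (T δ : ℝ) (p q : ℕ → ℝ) (n : ℕ) : Prop where
  delta_pos : 0 < δ
  p_nonneg : ∀ i < n, 0 ≤ p i
  p_add_le_q : ∀ i j, i ≤ j → j < n → p i + δ ≤ q j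
  q_add_le_p : ∀ i j, i < j → j < n → q i + δ ≤ p j
  q_add_le_T : ∀ i < n, q i + δ ≤ T

def zigzag (c δ : ℝ) (p q : ℕ → ℝ) (n : ℕ) (t : ℝ) : ℝ :=
  c / δ * ∑ i ∈ Finset.range n, (ramp δ (p i) t - ramp δ (q i) t)

-- The points `p 0 ≤ p 0 + δ ≤ p 1 ≤ ⋯ ≤ p (n - 1) + δ ≤ T`, at which `zigzag` alternates
-- between `0` and `c`.
def zigzagPartition (T δ : ℝ) (p : ℕ → ℝ) (n k : ℕ) : ℝ :=
  if k < 2 * n then p (k / 2) + (k % 2 : ℕ) * δ else T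

theorem continuous_zigzag (c δ : ℝ) (p q : ℕ → ℝ) (n : ℕ) :
    Continuous (zigzag c δ p q n) :=
  continuous_const.mul <| continuous_finsetSum _ fun i _ =>
    (continuous_ramp δ (p i)).sub (continuous_ramp δ (q i))

section ZigzagPartition

variable {T δ : ℝ} {p : ℕ → ℝ} {n : ℕ}

theorem zigzagPartition_two_mul {i : ℕ} (hi : i < n) :
    zigzagPartition T δ p n (2 * i) = p i := by
  rw [zigzagPartition, if_pos (by omega), show 2 * i / 2 = i by omega,
    show 2 * i % 2 = 0 by omega]
  simp

theorem zigzagPartition_two_mul_add_one {i : ℕ} (hi : i < n) :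
    zigzagPartition T δ p n (2 * i + 1) = p i + δ := by
  rw [zigzagPartition, if_pos (by omega), show (2 * i + 1) / 2 = i by omega,
    show (2 * i + 1) % 2 = 1 by omega]
  simp

theorem zigzagPartition_of_le {k : ℕ} (hk : 2 * n ≤ k) : zigzagPartition T δ p n k = T :=
  if_neg (by omega)

end ZigzagPartition

namespace WindowChain

variable {T δ c t : ℝ} {p q : ℕ → ℝ} {n : ℕ}

theorem p_add_le_T (h : WindowChain T δ p q n) {i : ℕ} (hi : i < n) : p i + δ ≤ T := by
  linarith [h.p_add_le_q i i le_rfl hi, h.q_add_le_T i hi, h.delta_pos]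

theorem Ico_p_subset (h : WindowChain T δ p q n) {i : ℕ} (hi : i < n) :
    Ico (p i) (p i + δ) ⊆ Ico 0 T :=
  Ico_subset_Ico (h.p_nonneg i hi) (h.p_add_le_T hi)

theorem q_nonneg (h : WindowChain T δ p q n) {i : ℕ} (hi : i < n) : 0 ≤ q i := by
  linarith [h.p_nonneg i hi, h.p_add_le_q i i le_rfl hi, h.delta_pos]

theorem Ico_q_subset (h : WindowChain T δ p q n) {i : ℕ} (hi : i < n) :
    Ico (q i) (q i + δ) ⊆ Ico 0 T :=
  Ico_subset_Ico (h.q_nonneg hi) (h.q_add_le_T i hi)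

theorem disjoint_Ico (h : WindowChain T δ p q n) {i j : ℕ} (hi : i < n) (hj : j < n) :
    Disjoint (Ico (p i) (p i + δ)) (Ico (q j) (q j + δ)) := by
  refine Set.disjoint_left.2 fun t ⟨hpt, htp⟩ ⟨hqt, htq⟩ => ?_
  rcases le_or_gt i j with hij | hji
  · linarith [h.p_add_le_q i j hij hj]
  · linarith [h.q_add_le_p j i hji hi]

theorem T_pos (h : WindowChain T δ p q n) (hn : 0 < n) : 0 < T := by
  linarith [h.p_nonneg 0 hn, h.p_add_le_T hn, h.delta_pos]

theorem p_le_p (h : WindowChain T δ p q n) {i j : ℕ} (hij : i ≤ j) (hj : j < n) :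
    p i ≤ p j := by
  rcases hij.eq_or_lt with rfl | hlt
  · rfl
  · linarith [h.p_add_le_q i i le_rfl (hlt.trans hj), h.q_add_le_p i j hlt hj, h.delta_pos]

theorem zigzag_eq_zero (h : WindowChain T δ p q n) (ht : ∀ i < n, t ≤ p i ∨ q i + δ ≤ t) :
    zigzag c δ p q n t = 0 := by
  refine mul_eq_zero_of_right _ (Finset.sum_eq_zero fun i hi => ?_)
  have hi := Finset.mem_range.1 hi
  have hpq := h.p_add_le_q i i le_rfl hi
  rcases ht i hi with hle | hge
  · rw [ramp_of_le hle, ramp_of_le (by linarith [h.delta_pos]), sub_self]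
  · rw [ramp_of_ge h.delta_pos.le (by linarith [h.delta_pos]), ramp_of_ge h.delta_pos.le hge,
      sub_self]

theorem zigzag_p_add (h : WindowChain T δ p q n) {i : ℕ} (hi : i < n) :
    zigzag c δ p q n (p i + δ) = c := by
  have hδ := h.delta_pos
  rw [zigzag, Finset.sum_eq_single_of_mem i (Finset.mem_range.2 hi), ramp_of_ge hδ.le le_rfl,
    ramp_of_le (h.p_add_le_q i i le_rfl hi), sub_zero, div_mul_cancel₀ c hδ.ne']
  intro j hj hji
  have hj := Finset.mem_range.1 hj
  have hpq := h.p_add_le_q j j le_rfl hj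
  rcases lt_or_gt_of_ne hji with hlt | hgt
  · have := h.q_add_le_p j i hlt hi
    rw [ramp_of_ge hδ.le (by linarith), ramp_of_ge hδ.le (by linarith), sub_self]
  · have := h.q_add_le_p i j hgt hj
    rw [ramp_of_le (by linarith [h.p_add_le_q i i le_rfl hi]),
      ramp_of_le (h.p_add_le_q i j hgt.le hj), sub_self]

theorem zigzag_p (h : WindowChain T δ p q n) {i : ℕ} (hi : i < n) :
    zigzag c δ p q n (p i) = 0 :=
  h.zigzag_eq_zero fun j hj => (le_or_gt i j).imp (h.p_le_p · hj) (h.q_add_le_p j i · hi)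

theorem zigzag_T (h : WindowChain T δ p q n) : zigzag c δ p q n T = 0 :=
  h.zigzag_eq_zero fun j hj => .inr (h.q_add_le_T j hj)

theorem zigzag_nonneg (h : WindowChain T δ p q n) (hc : 0 ≤ c) (t : ℝ) :
    0 ≤ zigzag c δ p q n t :=
  mul_nonneg (div_nonneg hc h.delta_pos.le) <| Finset.sum_nonneg fun i hi => sub_nonneg.2 <|
    antitone_ramp_left δ t (by linarith [h.p_add_le_q i i le_rfl (Finset.mem_range.1 hi),
      h.delta_pos])

theorem zigzag_le (h : WindowChain T δ p q n) (hc : 0 ≤ c) (t : ℝ) :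
    zigzag c δ p q n t ≤ c := by
  have hδ := h.delta_pos
  rcases n with _ | m
  · simp [zigzag, hc]
  have hsum := (antitone_ramp_left δ t).sum_range_succ_sub_le (a := p) (b := q) (n := m)
    fun i hi => by linarith [h.q_add_le_p i (i + 1) (by omega) (by omega)]
  calc zigzag c δ p q (m + 1) t ≤ c / δ * (ramp δ (p 0) t - ramp δ (q m) t) :=
        mul_le_mul_of_nonneg_left hsum (div_nonneg hc hδ.le)
    _ ≤ c / δ * δ := mul_le_mul_of_nonneg_left
        (by linarith [ramp_le (p := p 0) (t := t) hδ.le,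
          ramp_nonneg (δ := δ) (p := q m) (t := t)])
        (div_nonneg hc hδ.le)
    _ = c := div_mul_cancel₀ c hδ.ne'

theorem monotone_zigzagPartition (h : WindowChain T δ p q n) :
    Monotone (zigzagPartition T δ p n) := by
  refine monotone_nat_of_le_succ fun k => ?_
  obtain ⟨i, rfl | rfl⟩ := Nat.even_or_odd' k
  · by_cases hi : i < n
    · rw [zigzagPartition_two_mul hi, zigzagPartition_two_mul_add_one hi]
      linarith [h.delta_pos]
    · rw [zigzagPartition_of_le (by omega), zigzagPartition_of_le (by omega)]
  · rw [show 2 * i + 1 + 1 = 2 * (i + 1) by ring]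
    by_cases hi : i + 1 < n
    · rw [zigzagPartition_two_mul_add_one (by omega), zigzagPartition_two_mul hi]
      linarith [h.p_add_le_q i i le_rfl (by omega), h.q_add_le_p i (i + 1) (by omega) hi,
        h.delta_pos]
    by_cases hi' : i < n
    · rw [zigzagPartition_two_mul_add_one hi', zigzagPartition_of_le (by omega)]
      exact h.p_add_le_T hi'
    · rw [zigzagPartition_of_le (by omega), zigzagPartition_of_le (by omega)]

theorem zigzagPartition_mem (h : WindowChain T δ p q n) (hn : 0 < n) (k : ℕ) :
    zigzagPartition T δ p n k ∈ Icc 0 T := by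
  have hmono := h.monotone_zigzagPartition
  refine ⟨(h.p_nonneg 0 hn).trans ?_, ?_⟩
  · simpa [zigzagPartition_two_mul hn] using hmono (Nat.zero_le k)
  · rcases le_total k (2 * n) with hk | hk
    · simpa [zigzagPartition_of_le le_rfl] using hmono hk
    · exact (zigzagPartition_of_le hk).le

theorem edist_zigzag_zigzagPartition (h : WindowChain T δ p q n) {k : ℕ} (hk : k < 2 * n) :
    edist (zigzag c δ p q n (zigzagPartition T δ p n (k + 1)))
      (zigzag c δ p q n (zigzagPartition T δ p n k)) = ENNReal.ofReal |c| := by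
  obtain ⟨i, rfl | rfl⟩ := Nat.even_or_odd' k
  · rw [zigzagPartition_two_mul (by omega), zigzagPartition_two_mul_add_one (by omega),
      h.zigzag_p_add (by omega), h.zigzag_p (by omega), edist_dist, Real.dist_eq, sub_zero]
  · rw [zigzagPartition_two_mul_add_one (by omega), h.zigzag_p_add (by omega),
      show 2 * i + 1 + 1 = 2 * (i + 1) by ring, edist_dist, Real.dist_eq]
    by_cases hi : i + 1 < n
    · rw [zigzagPartition_two_mul hi, h.zigzag_p hi, zero_sub, abs_neg]
    · rw [zigzagPartition_of_le (by omega), h.zigzag_T, zero_sub, abs_neg]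

theorem eVariationOn_zigzag (h : WindowChain T δ p q n) (hc : 0 ≤ c) (hn : 0 < n) :
    eVariationOn (zigzag c δ p q n) (Icc 0 T) = ENNReal.ofReal (2 * n * c) := by
  have hδ := h.delta_pos
  refine le_antisymm ?_ ?_
  · have hsplit : zigzag c δ p q n =
        (fun t => c / δ * ∑ i ∈ Finset.range n, ramp δ (p i) t) -
          fun t => c / δ * ∑ i ∈ Finset.range n, ramp δ (q i) t := by
      funext t
      simp only [zigzag, Pi.sub_apply, Finset.sum_sub_distrib, mul_sub]
    have hvar := fun (r : ℕ → ℝ) (hr : ∀ i < n, 0 ≤ r i ∧ r i + δ ≤ T) =>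
      eVariationOn_mul_sum_ramp (div_nonneg hc hδ.le) hδ.le (h.T_pos hn).le hr
    calc eVariationOn (zigzag c δ p q n) (Icc 0 T)
        ≤ eVariationOn (fun t => c / δ * ∑ i ∈ Finset.range n, ramp δ (p i) t) (Icc 0 T) +
            eVariationOn (fun t => c / δ * ∑ i ∈ Finset.range n, ramp δ (q i) t) (Icc 0 T) :=
          hsplit ▸ eVariationOn.sub_le_add _ _ _
      _ = ENNReal.ofReal (c / δ * (n * δ)) + ENNReal.ofReal (c / δ * (n * δ)) := by
          rw [hvar p fun i hi => ⟨h.p_nonneg i hi, h.p_add_le_T hi⟩,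
            hvar q fun i hi => ⟨h.q_nonneg hi, h.q_add_le_T i hi⟩]
      _ = ENNReal.ofReal (2 * n * c) := by
          rw [← ENNReal.ofReal_add (by positivity) (by positivity)]
          congr 1
          field_simp
          ring
  · calc ENNReal.ofReal (2 * n * c)
        = ∑ k ∈ Finset.range (2 * n),
            edist (zigzag c δ p q n (zigzagPartition T δ p n (k + 1)))
              (zigzag c δ p q n (zigzagPartition T δ p n k)) := by
          rw [Finset.sum_congr rfl fun k hk => h.edist_zigzag_zigzagPartition
            (Finset.mem_range.1 hk), Finset.sum_const, Finset.card_range, nsmul_eq_mul,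
            abs_of_nonneg hc, ← ENNReal.ofReal_natCast, ← ENNReal.ofReal_mul (by positivity)]
          push_cast
          ring_nf
      _ ≤ _ := eVariationOn.sum_le h.monotone_zigzagPartition (h.zigzagPartition_mem hn)

theorem represents_zigzag (h : WindowChain T δ p q n) (hc : 0 ≤ c) :
    Represents T (((c / δ).toNNReal • windowMeasure δ p n).toSignedMeasure -
      ((c / δ).toNNReal • windowMeasure δ q n).toSignedMeasure) (zigzag c δ p q n) := by
  refine ⟨fun t _ => ?_, fun s hs hsT => ?_⟩
  · rw [sub_apply, Measure.toSignedMeasure_apply_measurable measurableSet_Icc,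
      Measure.toSignedMeasure_apply_measurable measurableSet_Icc, measureReal_nnreal_smul_apply,
      measureReal_nnreal_smul_apply, windowMeasure_real_Icc h.p_nonneg,
      windowMeasure_real_Icc fun i hi => h.q_nonneg hi,
      Real.coe_toNNReal _ (div_nonneg hc h.delta_pos.le), zigzag, Finset.sum_sub_distrib,
      mul_sub]
  · have hzero := fun (r : ℕ → ℝ) (hr : ∀ i < n, Ico (r i) (r i + δ) ⊆ Ico 0 T) =>
      windowMeasure_eq_zero (fun i hi => (hr i hi).trans Ico_subset_Icc_self) hs hsT
    rw [sub_apply, Measure.toSignedMeasure_apply_measurable hs,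
      Measure.toSignedMeasure_apply_measurable hs, measureReal_def, measureReal_def,
      Measure.smul_apply, Measure.smul_apply, hzero p fun i hi => h.Ico_p_subset hi,
      hzero q fun i hi => h.Ico_q_subset hi]
    simp

theorem mul_sub_le_intD_zigzag (h : WindowChain T δ p q n) (hc : 0 ≤ c) {x : ℝ → ℝ} {a b : ℝ}
    (hint_p : ∀ i < n, IntegrableOn x (Ico (p i) (p i + δ)))
    (hint_q : ∀ i < n, IntegrableOn x (Ico (q i) (q i + δ)))
    (hb : ∀ i < n, ∀ t ∈ Ico (p i) (p i + δ), b ≤ x t)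
    (ha : ∀ i < n, ∀ t ∈ Ico (q i) (q i + δ), x t ≤ a) :
    n * c * (b - a) ≤ intD T x (zigzag c δ p q n) := by
  have hδ := h.delta_pos
  have hsing := ((windowMeasure_mutuallySingular fun i hi j hj => h.disjoint_Ico hi hj).smul_nnreal
    (c / δ).toNNReal).symm.smul_nnreal (c / δ).toNNReal |>.symm
  have hp := mul_le_integral_windowMeasure hδ.le hint_p hb
  have hq := mul_le_integral_windowMeasure (x := fun t => -x t) hδ.le
    (fun i hi => (hint_q i hi).neg) fun i hi t ht => neg_le_neg (ha i hi t ht)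
  rw [integral_neg] at hq
  rw [(h.represents_zigzag hc).intD_eq, sInt_toSignedMeasure_sub hsing,
    integral_smul_nnreal_measure, integral_smul_nnreal_measure, NNReal.smul_def, NNReal.smul_def,
    Real.coe_toNNReal _ (div_nonneg hc hδ.le), smul_eq_mul, smul_eq_mul]
  calc n * c * (b - a) = c / δ * (n * δ * b) + c / δ * (n * δ * -a) := by
        field_simp; ring
    _ ≤ _ := by
        rw [sub_eq_add_neg, ← mul_neg]
        exact add_le_add (mul_le_mul_of_nonneg_left hp (div_nonneg hc hδ.le))
          (mul_le_mul_of_nonneg_left hq (div_nonneg hc hδ.le))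

theorem sSup_abs_zigzag (h : WindowChain T δ p q n) (hc : 0 ≤ c) (hn : 0 < n) :
    sSup {r : ℝ | ∃ t ∈ Icc 0 T, r = |zigzag c δ p q n t|} = c := by
  refine IsGreatest.csSup_eq ⟨⟨p 0 + δ, ?_, ?_⟩, ?_⟩
  · exact ⟨by linarith [h.p_nonneg 0 hn, h.delta_pos], h.p_add_le_T hn⟩
  · rw [h.zigzag_p_add hn, abs_of_nonneg hc]
  · rintro _ ⟨t, -, rfl⟩
    rw [abs_of_nonneg (h.zigzag_nonneg hc t)]
    exact h.zigzag_le hc t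

end WindowChain

theorem exists_downcrossings_of_hasUpcrossings {T a b : ℝ} {x : ℝ → ℝ} {n : ℕ}
    (h : HasUpcrossings T a b x (n + 1)) :
    ∃ p q : ℕ → ℝ, (∀ i < n, 0 ≤ p i ∧ q i < T ∧ b < x (p i) ∧ x (q i) < a) ∧
      (∀ i j, i ≤ j → j < n → p i < q j) ∧ (∀ i j, i < j → j < n → q i < p j) := by
  obtain ⟨s, u, hsu, hus, hx⟩ := h
  have hs_lt_u (i j : Fin (n + 1)) (hij : i ≤ j) : s i < u j := by
    rcases hij.eq_or_lt with rfl | hlt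
    · exact (hsu i).2.1
    · exact (hsu i).2.1.trans ((hus i j hlt).trans (hsu j).2.1)
  refine ⟨fun i => u ⟨min i n, by omega⟩, fun i => s ⟨min (i + 1) n, by omega⟩,
    fun i _ => ⟨(hsu _).1.trans (hsu _).2.1.le, (hs_lt_u _ _ le_rfl).trans_le (hsu _).2.2,
      (hx _).2, (hx _).1⟩,
    fun i j _ _ => hus _ _ (Fin.mk_lt_mk.2 (by omega)),
    fun i j _ _ => hs_lt_u _ _ (Fin.mk_le_mk.2 (by omega))⟩

theorem exists_windowChain {T a b : ℝ} {x : ℝ → ℝ} {p q : ℕ → ℝ} {n : ℕ}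
    (hx : ∀ t ∈ Ico 0 T, Tendsto x (𝓝[>] t) (𝓝 (x t)))
    (hpq_x : ∀ i < n, 0 ≤ p i ∧ q i < T ∧ b < x (p i) ∧ x (q i) < a)
    (hpq : ∀ i j, i ≤ j → j < n → p i < q j)
    (hqp : ∀ i j, i < j → j < n → q i < p j) :
    ∃ δ, WindowChain T δ p q n ∧
      (∀ i < n, ∀ t ∈ Ico (p i) (p i + δ), x t ∈ Ioo b (x (p i) + 1)) ∧
      (∀ i < n, ∀ t ∈ Ico (q i) (q i + δ), x t ∈ Ioo (x (q i) - 1) a) := by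
  have hfin := Set.finite_lt_nat n
  have hev : ∀ᶠ δ in 𝓝[>] (0 : ℝ), 0 < δ ∧ ∀ i ∈ {i | i < n},
      (∀ j ∈ {j | j < n}, (i ≤ j → p i + δ ≤ q j) ∧ (i < j → q i + δ ≤ p j)) ∧
      q i + δ ≤ T ∧ (∀ t ∈ Ico (p i) (p i + δ), x t ∈ Ioo b (x (p i) + 1)) ∧
      (∀ t ∈ Ico (q i) (q i + δ), x t ∈ Ioo (x (q i) - 1) a) := by
    refine eventually_mem_nhdsWithin.and ((eventually_all_finite hfin).2 fun i hi => ?_)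
    obtain ⟨hp0, hqT, hbp, haq⟩ := hpq_x i hi
    have hp_mem : p i ∈ Ico 0 T := ⟨hp0, (hpq i i le_rfl hi).trans hqT⟩
    have hq_mem : q i ∈ Ico 0 T := ⟨hp0.trans (hpq i i le_rfl hi).le, hqT⟩
    refine .and ((eventually_all_finite hfin).2 fun j hj => ?_) <|
      (eventually_add_le_of_lt hqT).and <|
      (eventually_forall_Ico_mem (hx _ hp_mem) (Ioo_mem_nhds hbp (lt_add_one _))).and
        (eventually_forall_Ico_mem (hx _ hq_mem) (Ioo_mem_nhds (sub_one_lt _) haq))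
    exact (eventually_imp_distrib_left.2 fun hij => eventually_add_le_of_lt (hpq i j hij hj)).and
      (eventually_imp_distrib_left.2 fun hij => eventually_add_le_of_lt (hqp i j hij hj))
  obtain ⟨δ, hδ, hall⟩ := hev.exists
  refine ⟨δ, ⟨hδ, fun i hi => (hpq_x i hi).1, fun i j hij hj => ?_, fun i j hij hj => ?_,
    fun i hi => (hall i hi).2.1⟩, fun i hi => (hall i hi).2.2.1, fun i hi => (hall i hi).2.2.2⟩
  · exact ((hall i (hij.trans_lt hj)).1 j hj).1 hij
  · exact ((hall i (hij.trans hj)).1 j hj).2 hij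

theorem stmt2_general (T : ℝ) (x : ℝ → ℝ) (hx : Cadlag T x) (a b : ℝ)
    (N : ℕ) (hN2 : 2 ≤ N) (hNhas : HasUpcrossings T a b x N) :
    ∃ A : ℝ → ℝ, MemA T A ∧
      (b - a) ≤ intD T x A ∧
      eVariationOn A (Set.Icc 0 T) = (2 : ENNReal) ∧
      sSup {r : ℝ | ∃ t ∈ Set.Icc (0:ℝ) T, r = |A t|} = 1 / ((N : ℝ) - 1) := by
  obtain ⟨n, rfl⟩ : ∃ n, N = n + 1 := ⟨N - 1, by omega⟩
  have hn : 0 < n := by omega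
  obtain ⟨p, q, hpq_x, hpq, hqp⟩ := exists_downcrossings_of_hasUpcrossings hNhas
  obtain ⟨δ, hW, hx_p, hx_q⟩ := exists_windowChain hx.1 hpq_x hpq hqp
  have hint (r : ℕ → ℝ) (hr : ∀ i < n, Ico (r i) (r i + δ) ⊆ Ico 0 T) {C₁ C₂ : ℕ → ℝ}
      (hC : ∀ i < n, ∀ t ∈ Ico (r i) (r i + δ), x t ∈ Ioo (C₁ i) (C₂ i)) (i : ℕ)
      (hi : i < n) :
      IntegrableOn x (Ico (r i) (r i + δ)) :=
    integrableOn_of_tendsto_nhdsGT measurableSet_Ico measure_Ico_lt_top.ne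
      (fun t ht => hx.1 t (hr i hi ht)) fun t ht => Ioo_subset_Icc_self (hC i hi t ht)
  set c : ℝ := 1 / n
  have hc : 0 ≤ c := by positivity
  have hnc : (n : ℝ) * c = 1 := mul_one_div_cancel (Nat.cast_pos.2 hn).ne'
  have hvar := hW.eVariationOn_zigzag hc hn
  rw [mul_assoc, hnc, mul_one] at hvar
  refine ⟨zigzag c δ p q n, ⟨(continuous_zigzag c δ p q n).continuousOn, ?_,
    hW.zigzag_eq_zero fun i hi => .inl (hW.p_nonneg i hi)⟩, ?_, ?_, ?_⟩
  · simp [BoundedVariationOn, hvar]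
  · calc b - a = n * c * (b - a) := by rw [hnc, one_mul]
      _ ≤ _ := hW.mul_sub_le_intD_zigzag hc (hint p (fun i hi => hW.Ico_p_subset hi) hx_p)
          (hint q (fun i hi => hW.Ico_q_subset hi) hx_q) (fun i hi t ht => (hx_p i hi t ht).1.le)
          (fun i hi t ht => (hx_q i hi t ht).2.le)
  · rw [hvar]; norm_num
  · rw [hW.sSup_abs_zigzag hc hn]; push_cast; ring

/-- Lemma 3.3. -/
theorem stmt2 (T : ℝ) (hT : 0 < T) (x : ℝ → ℝ) (hx : Cadlag T x) (a b : ℝ) (hab : a < b)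
    (N : ℕ) (hN2 : 2 ≤ N) (hNhas : HasUpcrossings T a b x N)
    (hNmax : ¬ HasUpcrossings T a b x (N + 1)) :
    ∃ A : ℝ → ℝ, MemA T A ∧
      (b - a) ≤ intD T x A ∧
      eVariationOn A (Set.Icc 0 T) = (2 : ENNReal) ∧
      sSup {r : ℝ | ∃ t ∈ Set.Icc (0:ℝ) T, r = |A t|} = 1 / ((N : ℝ) - 1) :=
  stmt2_general T x hx a b N hN2 hNhas
end
end

section
/- Theorem 4.8 (i): (D([0,T]), d), where d is the metric defining the mJ1 topology, is a complete and separable (Polish) metric space. -/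
open MeasureTheory Filter Set Topology

noncomputable section

/-- extension of `x ∈ D([0,T])` to a function which is `0` before `0` and
constantly `x T` after `T`. -/
def extFn (T : ℝ) (x : ℝ → ℝ) : ℝ → ℝ := fun t =>
  if t < 0 then 0 else if t < T then x t else x T

/-- `l` is an admissible time change of `[a,b]`: a strictly increasing continuous
bijection of `[a,b]` onto itself. -/
def TimeChange (a b : ℝ) (l : ℝ → ℝ) : Prop :=
  ContinuousOn l (Set.Icc a b) ∧ StrictMonoOn l (Set.Icc a b) ∧
    l a = a ∧ l b = b ∧ Set.MapsTo l (Set.Icc a b) (Set.Icc a b)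

/-- Billingsley's complete metric for the `J₁` topology on `D([a,b])`:
`d_Sk(x,y)` is the infimum, over time changes `l` of `[a,b]`, of the maximum of
`sup_{s<t} |log((l t - l s)/(t - s))|` and `sup_t |x t - y (l t)|`. -/
noncomputable def dSk (a b : ℝ) (x y : ℝ → ℝ) : ℝ :=
  sInf {r : ℝ | 0 ≤ r ∧ ∃ l : ℝ → ℝ, TimeChange a b l ∧
    (∀ s ∈ Set.Icc a b, ∀ t ∈ Set.Icc a b, s < t →
      |Real.log ((l t - l s) / (t - s))| ≤ r) ∧
    (∀ t ∈ Set.Icc a b, |x t - y (l t)| ≤ r)}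

/-- the metric of the `mJ₁` topology on `D([0,T])` (with parameter `ε > 0`). -/
noncomputable def dmJ (T ε : ℝ) (x y : ℝ → ℝ) : ℝ :=
  dSk (-ε) (T + ε) (extFn T x) (extFn T y)

/-!
Billingsley's arguments for the `J₁` metric are run on the extensions to `[-ε, T + ε]`. Time
changes, extended by the identity to `ℝ`, are closed under composition and inversion, which gives
symmetry and the triangle inequality; a vanishing distance forces equality by right continuity.

Completeness (Billingsley, Theorem 12.2): along a sequence with `d(uₖ, uₖ₊₁) < 2⁻ᵏ`, compositions
of the connecting time changes converge to time changes `μₖ`, and `ũₖ ∘ μₖ⁻¹` converges uniformly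
to a càdlàg limit, which is again an extension because `μₖ → id`.

Separability: a càdlàg function is uniformly close to a step function on a finite partition
(Billingsley, Lemma 12.1), and a time change of small size moves the jumps to rational times.
-/

open Real

/-! ### Time changes -/

/-- A time change of `[a, b]` of size `r`, extended by the identity to `ℝ`: all its slopes lie in
`[exp (-r), exp r]`, i.e. their logarithms are bounded by `r` as in `dSk`. -/
def IsTimeChange (a b r : ℝ) (f : ℝ → ℝ) : Prop :=
  (∀ t ∉ Ioo a b, f t = t) ∧
    ∀ s t, s < t → exp (-r) * (t - s) ≤ f t - f s ∧ f t - f s ≤ exp r * (t - s)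

lemma isTimeChange_id (a b : ℝ) : IsTimeChange a b 0 id :=
  ⟨fun _ _ => rfl, fun s t _ => by simp⟩

lemma isTimeChange_of_abs_sub_sub_le {a b κ : ℝ} {f : ℝ → ℝ} (hfix : ∀ t ∉ Ioo a b, f t = t)
    (hκ : κ ≤ 1 / 2) (h : ∀ s t, s < t → |f t - f s - (t - s)| ≤ κ * (t - s)) :
    IsTimeChange a b (2 * κ) f := by
  have hκ0 : 0 ≤ κ := by nlinarith [h 0 1 one_pos, abs_nonneg (f 1 - f 0 - (1 - 0))]
  have hexp : 1 + 2 * κ ≤ exp (2 * κ) := by linarith [add_one_le_exp (2 * κ)]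
  have hlo : exp (-(2 * κ)) ≤ 1 - κ := by
    rw [exp_neg]
    calc (exp (2 * κ))⁻¹ ≤ (1 + 2 * κ)⁻¹ := inv_anti₀ (by linarith) hexp
      _ ≤ 1 - κ := by
        rw [inv_le_iff_one_le_mul₀ (by linarith)]
        nlinarith
  refine ⟨hfix, fun s t hst => ?_⟩
  obtain ⟨h1, h2⟩ := abs_le.1 (h s t hst)
  have hts : 0 ≤ t - s := by linarith
  constructor
  · nlinarith [mul_le_mul_of_nonneg_right hlo hts]
  · nlinarith [mul_le_mul_of_nonneg_right hexp hts]

namespace IsTimeChange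

variable {a b r r' : ℝ} {f g : ℝ → ℝ}

lemma apply_left (h : IsTimeChange a b r f) : f a = a := h.1 a fun ha => lt_irrefl a ha.1

lemma apply_right (h : IsTimeChange a b r f) : f b = b := h.1 b fun hb => lt_irrefl b hb.2

lemma nonneg (h : IsTimeChange a b r f) : 0 ≤ r := by
  obtain ⟨h1, h2⟩ := h.2 0 1 one_pos
  have : exp (-r) ≤ exp r := by linarith
  linarith [exp_le_exp.1 this]

lemma strictMono (h : IsTimeChange a b r f) : StrictMono f := fun s t hst => by
  have := (h.2 s t hst).1
  have : 0 < exp (-r) * (t - s) := mul_pos (exp_pos _) (sub_pos.2 hst)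
  linarith

lemma abs_sub_le_mul (h : IsTimeChange a b r f) (s t : ℝ) : |f t - f s| ≤ exp r * |t - s| := by
  rcases lt_trichotomy s t with hst | rfl | hts
  · rw [abs_of_pos (sub_pos.2 (h.strictMono hst)), abs_of_pos (sub_pos.2 hst)]
    exact (h.2 s t hst).2
  · simp
  · rw [abs_sub_comm, abs_sub_comm t, abs_of_pos (sub_pos.2 (h.strictMono hts)),
      abs_of_pos (sub_pos.2 hts)]
    exact (h.2 t s hts).2

lemma continuous (h : IsTimeChange a b r f) : Continuous f :=
  (LipschitzWith.of_dist_le_mul (K := ⟨exp r, (exp_pos r).le⟩) fun s t => by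
    rw [Real.dist_eq, Real.dist_eq]; exact h.abs_sub_le_mul t s).continuous

lemma surjective (h : IsTimeChange a b r f) : Function.Surjective f := by
  refine h.continuous.surjective (tendsto_id.congr' ?_) (tendsto_id.congr' ?_)
  · filter_upwards [eventually_ge_atTop b] with t ht
    exact (h.1 t fun hm => hm.2.not_ge ht).symm
  · filter_upwards [eventually_le_atBot a] with t ht
    exact (h.1 t fun hm => hm.1.not_ge ht).symm

lemma mapsTo (h : IsTimeChange a b r f) : MapsTo f (Icc a b) (Icc a b) := fun _ ht =>
  ⟨h.apply_left ▸ h.strictMono.monotone ht.1, h.apply_right ▸ h.strictMono.monotone ht.2⟩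

lemma mono (h : IsTimeChange a b r f) (hr : r ≤ r') : IsTimeChange a b r' f := by
  refine ⟨h.1, fun s t hst => ?_⟩
  have hts : 0 ≤ t - s := by linarith
  obtain ⟨h1, h2⟩ := h.2 s t hst
  exact ⟨(mul_le_mul_of_nonneg_right (exp_le_exp.2 (by linarith)) hts).trans h1,
    h2.trans (mul_le_mul_of_nonneg_right (exp_le_exp.2 hr) hts)⟩

lemma comp (hg : IsTimeChange a b r' g) (hf : IsTimeChange a b r f) :
    IsTimeChange a b (r' + r) (g ∘ f) := by
  refine ⟨fun t ht => by simp [hf.1 t ht, hg.1 t ht], fun s t hst => ?_⟩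
  obtain ⟨h1, h2⟩ := hf.2 s t hst
  obtain ⟨h3, h4⟩ := hg.2 (f s) (f t) (hf.strictMono hst)
  simp only [Function.comp_apply, neg_add, exp_add, mul_assoc]
  exact ⟨(mul_le_mul_of_nonneg_left h1 (exp_pos _).le).trans h3,
    h4.trans (mul_le_mul_of_nonneg_left h2 (exp_pos _).le)⟩

lemma exists_inverse (h : IsTimeChange a b r f) :
    ∃ g, IsTimeChange a b r g ∧ Function.LeftInverse g f ∧ Function.RightInverse g f := by
  let e := StrictMono.orderIsoOfSurjective f h.strictMono h.surjective
  have hinv : exp (-r) * exp r = 1 := by rw [← exp_add]; simp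
  refine ⟨e.symm, ⟨fun t ht => ?_, fun s t hst => ?_⟩, e.symm_apply_apply, e.apply_symm_apply⟩
  · conv_lhs => rw [← h.1 t ht]
    exact e.symm_apply_apply t
  · obtain ⟨h1, h2⟩ := h.2 _ _ (e.symm.strictMono hst)
    rw [show f (e.symm t) = t from e.apply_symm_apply t,
      show f (e.symm s) = s from e.apply_symm_apply s] at h1 h2
    constructor
    · calc exp (-r) * (t - s) ≤ exp (-r) * (exp r * (e.symm t - e.symm s)) :=
            mul_le_mul_of_nonneg_left h2 (exp_pos _).le
        _ = e.symm t - e.symm s := by rw [← mul_assoc, hinv, one_mul]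
    · calc e.symm t - e.symm s = exp r * (exp (-r) * (e.symm t - e.symm s)) := by
            rw [← mul_assoc, mul_comm (exp r), hinv, one_mul]
        _ ≤ exp r * (t - s) := mul_le_mul_of_nonneg_left h1 (exp_pos _).le

lemma abs_sub_self_le (h : IsTimeChange a b r f) (hab : a ≤ b) (t : ℝ) :
    |f t - t| ≤ (exp r - 1) * (b - a) := by
  have hr : 0 ≤ exp r - 1 := by linarith [add_one_le_exp r, h.nonneg]
  by_cases ht : t ∈ Ioo a b
  · obtain ⟨h1, h2⟩ := h.2 a t ht.1
    rw [h.apply_left] at h1 h2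
    have hsym : 1 - exp (-r) ≤ exp r - 1 := by linarith [add_one_le_exp r, add_one_le_exp (-r)]
    have hta : 0 ≤ t - a := by linarith [ht.1]
    have htb : (exp r - 1) * (t - a) ≤ (exp r - 1) * (b - a) :=
      mul_le_mul_of_nonneg_left (by linarith [ht.2]) hr
    rw [abs_le]
    constructor <;> nlinarith [mul_le_mul_of_nonneg_right hsym hta]
  · rw [h.1 t ht, sub_self, abs_zero]
    exact mul_nonneg hr (sub_nonneg.2 hab)

lemma of_tendsto {F : ℕ → ℝ → ℝ} (hF : ∀ n, IsTimeChange a b r (F n))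
    (hlim : ∀ t, Tendsto (fun n => F n t) atTop (𝓝 (f t))) : IsTimeChange a b r f := by
  refine ⟨fun t ht => tendsto_nhds_unique (hlim t) ?_, fun s t hst => ⟨?_, ?_⟩⟩
  · simp only [fun n => (hF n).1 t ht]
    exact tendsto_const_nhds
  · exact ge_of_tendsto ((hlim t).sub (hlim s)) (Eventually.of_forall fun n => ((hF n).2 s t hst).1)
  · exact le_of_tendsto ((hlim t).sub (hlim s)) (Eventually.of_forall fun n => ((hF n).2 s t hst).2)

end IsTimeChange

/-! ### The Skorokhod distance -/

lemma abs_log_div_le_iff {u v r : ℝ} (hu : 0 < u) (hv : 0 < v) :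
    |log (u / v)| ≤ r ↔ exp (-r) * v ≤ u ∧ u ≤ exp r * v := by
  rw [abs_le, le_log_iff_exp_le (div_pos hu hv), log_le_iff_le_exp (div_pos hu hv),
    le_div_iff₀ hv, div_le_iff₀ hv]

lemma tendsto_exp_sub_one_mul (C : ℝ) : Tendsto (fun r => (exp r - 1) * C) (𝓝 0) (𝓝 0) := by
  have h : Continuous fun r => (exp r - 1) * C := by fun_prop
  simpa using h.tendsto 0

/-- The set whose infimum is `dSk a b x y`. -/
def skSet (a b : ℝ) (x y : ℝ → ℝ) : Set ℝ :=
  {r : ℝ | 0 ≤ r ∧ ∃ l : ℝ → ℝ, TimeChange a b l ∧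
    (∀ s ∈ Set.Icc a b, ∀ t ∈ Set.Icc a b, s < t →
      |Real.log ((l t - l s) / (t - s))| ≤ r) ∧
    (∀ t ∈ Set.Icc a b, |x t - y (l t)| ≤ r)}

section Skorokhod

variable {a b r r' : ℝ} {f : ℝ → ℝ} {x y z : ℝ → ℝ}

lemma dSk_nonneg : 0 ≤ dSk a b x y := Real.sInf_nonneg fun _ hr => hr.1

lemma IsTimeChange.mem_skSet (h : IsTimeChange a b r f)
    (hxy : ∀ t ∈ Icc a b, |x t - y (f t)| ≤ r) : r ∈ skSet a b x y :=
  ⟨h.nonneg, f, ⟨h.continuous.continuousOn, h.strictMono.strictMonoOn _, h.apply_left,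
    h.apply_right, h.mapsTo⟩, fun s _ t _ hst =>
    (abs_log_div_le_iff (sub_pos.2 (h.strictMono hst)) (sub_pos.2 hst)).2 (h.2 s t hst), hxy⟩

lemma IsTimeChange.dSk_le (h : IsTimeChange a b r f)
    (hxy : ∀ t ∈ Icc a b, |x t - y (f t)| ≤ r) : dSk a b x y ≤ r :=
  csInf_le ⟨0, fun _ hr => hr.1⟩ (h.mem_skSet hxy)

/-- Extending the time change by the identity outside `[a, b]` keeps its slopes within
`[exp (-r), exp r]`, since that interval contains `1`. -/
lemma exists_isTimeChange_of_mem_skSet (hab : a ≤ b) (hr : r ∈ skSet a b x y) :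
    ∃ f, IsTimeChange a b r f ∧ ∀ t ∈ Icc a b, |x t - y (f t)| ≤ r := by
  obtain ⟨hr0, l, ⟨-, hlm, hla, hlb, -⟩, hlog, hxy⟩ := hr
  set c : ℝ → ℝ := fun t => max a (min b t)
  have hc : ∀ t, c t ∈ Icc a b := fun t => ⟨le_max_left _ _, max_le hab (min_le_left _ _)⟩
  have hl : ∀ s t, c s ≤ c t → exp (-r) * (c t - c s) ≤ l (c t) - l (c s) ∧
      l (c t) - l (c s) ≤ exp r * (c t - c s) := by
    intro s t hst
    rcases hst.lt_or_eq with hlt | heq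
    · exact (abs_log_div_le_iff (sub_pos.2 (hlm (hc s) (hc t) hlt)) (sub_pos.2 hlt)).1
        (hlog _ (hc s) _ (hc t) hlt)
    · simp [heq]
  refine ⟨fun t => l (c t) + (t - c t), ⟨fun t ht => ?_, fun s t hst => ?_⟩, fun t ht => ?_⟩
  · by_cases hta : t ≤ a
    · have : c t = a := max_eq_left ((min_le_right _ _).trans hta)
      simp only [this, hla]; ring
    · have htb : b ≤ t := not_lt.1 fun htb => ht ⟨not_le.1 hta, htb⟩
      have : c t = b := by simp only [c, min_eq_left htb, max_eq_right hab]
      simp only [this, hlb]; ring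
  · have hcst : c s ≤ c t := max_le_max le_rfl (min_le_min le_rfl hst.le)
    have hlip : c t - c s ≤ t - s := by
      simp only [c, max_def, min_def]
      split_ifs <;> linarith
    obtain ⟨h1, h2⟩ := hl s t hcst
    have e1 : exp (-r) ≤ 1 := exp_le_one_iff.2 (by linarith)
    have e2 : 1 ≤ exp r := one_le_exp hr0
    constructor <;> nlinarith
  · have : c t = t := by simp only [c, min_eq_right ht.2, max_eq_right ht.1]
    simp only [this, sub_self, add_zero]
    exact hxy t ht

lemma skSet_nonempty {M : ℝ} (hM : ∀ t ∈ Icc a b, |x t - y t| ≤ M) :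
    (skSet a b x y).Nonempty :=
  ⟨max M 0, ((isTimeChange_id a b).mono (le_max_right _ _)).mem_skSet fun t ht =>
    (hM t ht).trans (le_max_left _ _)⟩

lemma dSk_self : dSk a b x x = 0 :=
  le_antisymm ((isTimeChange_id a b).dSk_le (by simp)) dSk_nonneg

lemma exists_isTimeChange_of_dSk_lt {c : ℝ} (hab : a ≤ b) (hne : (skSet a b x y).Nonempty)
    (h : dSk a b x y < c) :
    ∃ r < c, ∃ f, IsTimeChange a b r f ∧ ∀ t ∈ Icc a b, |x t - y (f t)| ≤ r := by
  obtain ⟨r, hr, hrc⟩ := exists_lt_of_csInf_lt hne h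
  exact ⟨r, hrc, exists_isTimeChange_of_mem_skSet hab hr⟩

lemma skSet_subset_comm (hab : a ≤ b) : skSet a b x y ⊆ skSet a b y x := by
  intro r hr
  obtain ⟨f, hf, hxy⟩ := exists_isTimeChange_of_mem_skSet hab hr
  obtain ⟨g, hg, -, hfg⟩ := hf.exists_inverse
  refine hg.mem_skSet fun t ht => ?_
  have := hxy (g t) (hg.mapsTo ht)
  rwa [hfg t, abs_sub_comm] at this

lemma dSk_comm (hab : a ≤ b) : dSk a b x y = dSk a b y x :=
  congrArg sInf ((skSet_subset_comm hab).antisymm (skSet_subset_comm hab))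

lemma add_mem_skSet (hab : a ≤ b) (hxy : r ∈ skSet a b x y) (hyz : r' ∈ skSet a b y z) :
    r' + r ∈ skSet a b x z := by
  obtain ⟨f, hf, hfxy⟩ := exists_isTimeChange_of_mem_skSet hab hxy
  obtain ⟨g, hg, hgyz⟩ := exists_isTimeChange_of_mem_skSet hab hyz
  refine (hg.comp hf).mem_skSet fun t ht => ?_
  calc |x t - z (g (f t))| ≤ |x t - y (f t)| + |y (f t) - z (g (f t))| := abs_sub_le _ _ _
    _ ≤ r + r' := add_le_add (hfxy t ht) (hgyz _ (hf.mapsTo ht))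
    _ = r' + r := add_comm _ _

lemma dSk_triangle (hab : a ≤ b) (hxy : (skSet a b x y).Nonempty)
    (hyz : (skSet a b y z).Nonempty) : dSk a b x z ≤ dSk a b x y + dSk a b y z := by
  refine le_of_forall_pos_lt_add fun δ hδ => ?_
  obtain ⟨r, hr, hrlt⟩ := exists_lt_of_csInf_lt hxy
    (lt_add_of_pos_right (dSk a b x y) (half_pos hδ))
  obtain ⟨r', hr', hr'lt⟩ := exists_lt_of_csInf_lt hyz
    (lt_add_of_pos_right (dSk a b y z) (half_pos hδ))
  calc dSk a b x z ≤ r' + r := csInf_le ⟨0, fun _ h => h.1⟩ (add_mem_skSet hab hr hr')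
    _ < dSk a b x y + dSk a b y z + δ := by linarith

/-- Compare `x` and `y` at a point `s` just right of `t` whose image under a time change of
small size still lies just right of `t`. -/
lemma eqOn_of_dSk_eq_zero (hab : a ≤ b) (hne : (skSet a b x y).Nonempty)
    (hx : ∀ t ∈ Ico a b, ContinuousWithinAt x (Ioi t) t)
    (hy : ∀ t ∈ Ico a b, ContinuousWithinAt y (Ioi t) t) (h : dSk a b x y = 0) :
    EqOn x y (Icc a b) := by
  have hsmall : ∀ c > 0, ∃ r < c, ∃ f, IsTimeChange a b r f ∧ ∀ t ∈ Icc a b, |x t - y (f t)| ≤ r :=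
    fun c hc => exists_isTimeChange_of_dSk_lt hab hne (h ▸ hc)
  intro t ht
  refine eq_of_forall_dist_le fun δ hδ => ?_
  rw [Real.dist_eq]
  rcases eq_or_lt_of_le ht.2 with rfl | htb
  · obtain ⟨r, hr, f, hf, hxy⟩ := hsmall δ hδ
    have := hxy t ht
    rw [hf.apply_right] at this
    linarith
  have hxt := Metric.tendsto_nhds.1 (hx t ⟨ht.1, htb⟩) (δ / 3) (by positivity)
  have hyt := Metric.tendsto_nhds.1 (hy t ⟨ht.1, htb⟩) (δ / 3) (by positivity)
  obtain ⟨u, htu, hU⟩ := mem_nhdsGT_iff_exists_Ioo_subset.1 ((hxt.and hyt).and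
    (nhdsWithin_le_nhds (Iio_mem_nhds htb)))
  have htu' : t < u := htu
  obtain ⟨ρ, hρ, hρdisp⟩ := Metric.eventually_nhds_iff.1
    ((tendsto_exp_sub_one_mul (b - a)).eventually (gt_mem_nhds (half_pos (sub_pos.2 htu'))))
  obtain ⟨r, hr, f, hf, hxy⟩ := hsmall (min (δ / 3) ρ) (lt_min (by positivity) hρ)
  set s := (t + u) / 2 with hs_def
  have hdisp : |f s - s| < (u - t) / 2 := (hf.abs_sub_self_le hab s).trans_lt (hρdisp (by
    rw [Real.dist_eq, sub_zero, abs_of_nonneg hf.nonneg]; exact hr.trans_le (min_le_right _ _)))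
  have hs : s ∈ Ioo t u := ⟨by rw [hs_def]; linarith, by rw [hs_def]; linarith⟩
  have hfs : f s ∈ Ioo t u := by
    rw [abs_lt] at hdisp
    constructor <;> linarith [hs_def]
  obtain ⟨⟨hxs, -⟩, hsb⟩ := hU hs
  obtain ⟨⟨-, hyfs⟩, -⟩ := hU hfs
  rw [Real.dist_eq] at hxs hyfs
  have hxys := hxy s ⟨by linarith [ht.1], le_of_lt hsb⟩
  have : r < δ / 3 := hr.trans_le (min_le_left _ _)
  calc |x t - y t| ≤ |x t - x s| + (|x s - y (f s)| + |y (f s) - y t|) :=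
        (abs_sub_le _ (x s) _).trans (add_le_add_right (abs_sub_le _ (y (f s)) _) _)
    _ ≤ δ := by rw [abs_sub_comm (x t)]; linarith

end Skorokhod

/-! ### Partitions of small oscillation -/

/-- Junk value `sSup ∅ = 0` when no point of `P` is `≤ w`. -/
def floorIn (P : Finset ℝ) (w : ℝ) : ℝ := sSup ↑(P.filter (· ≤ w))

section floorIn

variable {P : Finset ℝ} {p w σ : ℝ}

lemma floorIn_mem (h : ∃ p ∈ P, p ≤ w) : floorIn P w ∈ P ∧ floorIn P w ≤ w := by
  obtain ⟨p, hp, hpw⟩ := h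
  exact Finset.mem_filter.1 (Finset.Nonempty.csSup_mem ⟨p, Finset.mem_filter.2 ⟨hp, hpw⟩⟩)

lemma le_floorIn (hp : p ∈ P) (hpw : p ≤ w) : p ≤ floorIn P w :=
  le_csSup (Finset.bddAbove _) (Finset.mem_coe.2 (Finset.mem_filter.2 ⟨hp, hpw⟩))

lemma floorIn_eq (hp : p ∈ P) (hpw : p ≤ w) (hmax : ∀ q ∈ P, q ≤ w → q ≤ p) :
    floorIn P w = p :=
  le_antisymm (csSup_le ⟨p, Finset.mem_filter.2 ⟨hp, hpw⟩⟩ fun q hq =>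
    hmax q (Finset.mem_filter.1 hq).1 (Finset.mem_filter.1 hq).2) (le_floorIn hp hpw)

lemma floorIn_insert_of_lt (h : w < σ) : floorIn (insert σ P) w = floorIn P w := by
  simp only [floorIn, Finset.filter_insert, if_neg (not_le.2 h)]

end floorIn

/-- `P` cuts `[0, τ]` into cells `[p, p')` on each of which `x` stays within `δ` of its value
at the left end. -/
def IsOscPartition (x : ℝ → ℝ) (δ τ : ℝ) (P : Finset ℝ) : Prop :=
  0 ∈ P ∧ τ ∈ P ∧ (∀ p ∈ P, p ∈ Icc 0 τ) ∧ ∀ w ∈ Icc 0 τ, |x w - x (floorIn P w)| ≤ δ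

section IsOscPartition

variable {x : ℝ → ℝ} {δ σ σ' T : ℝ} {P : Finset ℝ}

lemma isOscPartition_zero (hδ : 0 ≤ δ) : IsOscPartition x δ 0 {0} := by
  refine ⟨Finset.mem_singleton_self 0, Finset.mem_singleton_self 0, fun p hp => ?_, fun w hw => ?_⟩
  · rw [Finset.mem_singleton.1 hp]; exact left_mem_Icc.2 le_rfl
  · obtain rfl : w = 0 := le_antisymm hw.2 hw.1
    rw [floorIn_eq (Finset.mem_singleton_self 0) le_rfl fun q hq _ =>
      (Finset.mem_singleton.1 hq).le, sub_self, abs_zero]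
    exact hδ

lemma IsOscPartition.insert (hP : IsOscPartition x δ σ P) (hσσ' : σ < σ')
    (hosc : ∀ w ∈ Ico σ σ', |x w - x σ| ≤ δ) (hδ : 0 ≤ δ) :
    IsOscPartition x δ σ' (insert σ' P) := by
  obtain ⟨h0, hσ, hsub, hx⟩ := hP
  have hσ0 : 0 ≤ σ := (hsub 0 h0).2
  refine ⟨Finset.mem_insert_of_mem h0, Finset.mem_insert_self _ _, fun p hp => ?_, fun w hw => ?_⟩
  · rcases Finset.mem_insert.1 hp with rfl | hp
    · exact ⟨by linarith, le_rfl⟩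
    · exact ⟨(hsub p hp).1, (hsub p hp).2.trans hσσ'.le⟩
  rcases eq_or_lt_of_le hw.2 with rfl | hwσ'
  · rw [floorIn_eq (Finset.mem_insert_self _ _) le_rfl fun q hq _ => ?_, sub_self, abs_zero]
    · exact hδ
    · rcases Finset.mem_insert.1 hq with rfl | hq
      exacts [le_rfl, (hsub q hq).2.trans hσσ'.le]
  rw [floorIn_insert_of_lt hwσ']
  rcases le_or_gt w σ with hwσ | hσw
  · exact hx w ⟨hw.1, hwσ⟩
  · rw [floorIn_eq hσ hσw.le fun q hq _ => (hsub q hq).2]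
    exact hosc w ⟨hσw.le, hwσ'⟩

end IsOscPartition

section Cadlag

variable {T : ℝ} {x y : ℝ → ℝ}

/-- Billingsley's Lemma 12.1, by a supremum argument: the supremum of the `τ` admitting such a
partition admits one (left limits) and cannot be smaller than `T` (right continuity). -/
lemma Cadlag.exists_isOscPartition (hx : Cadlag T x) (hT : 0 ≤ T) {δ : ℝ} (hδ : 0 < δ) :
    ∃ P, IsOscPartition x δ T P := by
  set A := {τ | τ ∈ Icc 0 T ∧ ∃ P, IsOscPartition x δ τ P}
  have h0 : (0 : ℝ) ∈ A := ⟨⟨le_rfl, hT⟩, _, isOscPartition_zero hδ.le⟩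
  have hbdd : BddAbove A := ⟨T, fun τ h => h.1.2⟩
  have hτ : sSup A ∈ Icc 0 T := ⟨le_csSup hbdd h0, csSup_le ⟨0, h0⟩ fun _ h => h.1.2⟩
  have hτA : sSup A ∈ A := by
    rcases eq_or_lt_of_le hτ.1 with h | hpos
    · rwa [← h]
    obtain ⟨L, hL⟩ := hx.2 _ ⟨hpos, hτ.2⟩
    obtain ⟨η, hη, hηL⟩ := mem_nhdsLT_iff_exists_Ioo_subset.1
      (Metric.tendsto_nhds.1 hL (δ / 2) (half_pos hδ))
    obtain ⟨σ, hσA, hησ⟩ := exists_lt_of_lt_csSup ⟨0, h0⟩ (show η < sSup A from hη)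
    rcases eq_or_lt_of_le (le_csSup hbdd hσA) with h | hστ
    · rwa [← h]
    obtain ⟨P, hP⟩ := hσA.2
    refine ⟨hτ, _, hP.insert hστ (fun w hw => ?_) hδ.le⟩
    have h1 : dist (x w) L < δ / 2 := hηL ⟨hησ.trans_le hw.1, hw.2⟩
    have h2 : dist (x σ) L < δ / 2 := hηL ⟨hησ, hστ⟩
    rw [← Real.dist_eq]
    linarith [dist_triangle_right (x w) (x σ) L]
  rcases eq_or_lt_of_le hτ.2 with h | hτT
  · exact h ▸ hτA.2
  obtain ⟨P, hP⟩ := hτA.2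
  obtain ⟨η, hη, hηx⟩ := mem_nhdsGT_iff_exists_Ioo_subset.1
    (Metric.tendsto_nhds.1 (hx.1 _ ⟨hτ.1, hτT⟩) δ hδ)
  have hτη : sSup A < min η T := lt_min hη hτT
  have : min η T ∈ A := by
    refine ⟨⟨hτ.1.trans hτη.le, min_le_right _ _⟩, _, hP.insert hτη (fun w hw => ?_) hδ.le⟩
    rcases eq_or_lt_of_le hw.1 with rfl | hτw
    · simpa using hδ.le
    · have : dist (x w) (x (sSup A)) < δ := hηx ⟨hτw, hw.2.trans_le (min_le_left _ _)⟩
      exact (Real.dist_eq _ _ ▸ this).le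
  exact absurd (le_csSup hbdd this) (not_le.2 hτη)

lemma Cadlag.exists_abs_le (hx : Cadlag T x) (hT : 0 ≤ T) : ∃ M, ∀ t ∈ Icc 0 T, |x t| ≤ M := by
  obtain ⟨P, h0, -, -, hP⟩ := hx.exists_isOscPartition hT one_pos
  refine ⟨P.sup' ⟨0, h0⟩ (fun p => |x p|) + 1, fun t ht => ?_⟩
  have h1 := Finset.le_sup' (fun p => |x p|) (floorIn_mem ⟨0, h0, ht.1⟩).1
  have h2 := abs_sub_abs_le_abs_sub (x t) (x (floorIn P t))
  linarith [hP t ht]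

lemma extFn_of_neg {t : ℝ} (ht : t < 0) : extFn T x t = 0 := if_pos ht

lemma extFn_of_nonneg {t : ℝ} (ht : 0 ≤ t) : extFn T x t = x (min t T) := by
  simp only [extFn, if_neg (not_lt.2 ht)]
  split_ifs with h
  · rw [min_eq_left h.le]
  · rw [min_eq_right (not_lt.1 h)]

lemma extFn_of_mem_Icc {t : ℝ} (ht : t ∈ Icc 0 T) : extFn T x t = x t := by
  rw [extFn_of_nonneg ht.1, min_eq_left ht.2]

lemma extFn_congr (hT : 0 ≤ T) (h : EqOn x y (Icc 0 T)) : extFn T x = extFn T y := by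
  funext t
  rcases lt_or_ge t 0 with ht | ht
  · rw [extFn_of_neg ht, extFn_of_neg ht]
  · rw [extFn_of_nonneg ht, extFn_of_nonneg ht]
    exact h ⟨le_min ht hT, min_le_right _ _⟩

lemma Cadlag.exists_abs_extFn_le (hx : Cadlag T x) (hT : 0 ≤ T) :
    ∃ M, ∀ t, |extFn T x t| ≤ M := by
  obtain ⟨M, hM⟩ := hx.exists_abs_le hT
  refine ⟨max M 0, fun t => ?_⟩
  rcases lt_or_ge t 0 with ht | ht
  · simp [extFn_of_neg ht]
  · rw [extFn_of_nonneg ht]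
    exact (hM _ ⟨le_min ht hT, min_le_right _ _⟩).trans (le_max_left _ _)

lemma Cadlag.skSet_extFn_nonempty (hx : Cadlag T x) (hy : Cadlag T y) (hT : 0 ≤ T) (a b : ℝ) :
    (skSet a b (extFn T x) (extFn T y)).Nonempty := by
  obtain ⟨Mx, hMx⟩ := hx.exists_abs_extFn_le hT
  obtain ⟨My, hMy⟩ := hy.exists_abs_extFn_le hT
  exact skSet_nonempty fun t _ => (abs_sub _ _).trans (add_le_add (hMx t) (hMy t))

end Cadlag

/-! ### Càdlàg functions on the line -/

def IsCadlagOn (s : Set ℝ) (f : ℝ → ℝ) : Prop :=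
  ∀ t ∈ s, ContinuousWithinAt f (Ioi t) t ∧ ∃ L, Tendsto f (𝓝[<] t) (𝓝 L)

lemma IsCadlagOn.mono {s s' : Set ℝ} {f : ℝ → ℝ} (h : IsCadlagOn s f) (hs : s' ⊆ s) :
    IsCadlagOn s' f :=
  fun t ht => h t (hs ht)

lemma IsCadlagOn.cadlag {s : Set ℝ} {f : ℝ → ℝ} {T : ℝ} (h : IsCadlagOn s f) (hs : Icc 0 T ⊆ s) :
    Cadlag T f :=
  ⟨fun t ht => (h t (hs (Ico_subset_Icc_self ht))).1,
    fun t ht => (h t (hs (Ioc_subset_Icc_self ht))).2⟩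

lemma Cadlag.isCadlagOn_extFn {T : ℝ} {x : ℝ → ℝ} (hx : Cadlag T x) (hT : 0 ≤ T) :
    IsCadlagOn univ (extFn T x) := by
  intro t _
  constructor
  · rcases lt_or_ge t 0 with ht0 | ht0
    · refine tendsto_const_nhds.congr' ?_
      filter_upwards [Ioo_mem_nhdsGT ht0] with s hs
      rw [extFn_of_neg ht0, extFn_of_neg hs.2]
    rcases lt_or_ge t T with htT | htT
    · rw [ContinuousWithinAt, extFn_of_mem_Icc ⟨ht0, htT.le⟩]
      refine (hx.1 t ⟨ht0, htT⟩).congr' ?_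
      filter_upwards [Ioo_mem_nhdsGT htT] with s hs
      rw [extFn_of_mem_Icc ⟨ht0.trans hs.1.le, hs.2.le⟩]
    · refine tendsto_const_nhds.congr' ?_
      filter_upwards [self_mem_nhdsWithin] with s (hs : t < s)
      rw [extFn_of_nonneg ht0, extFn_of_nonneg (ht0.trans hs.le), min_eq_right htT,
        min_eq_right (htT.trans hs.le)]
  · rcases le_or_gt t 0 with ht0 | ht0
    · refine ⟨0, tendsto_const_nhds.congr' ?_⟩
      filter_upwards [self_mem_nhdsWithin] with s (hs : s < t)
      rw [extFn_of_neg (hs.trans_le ht0)]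
    rcases le_or_gt t T with htT | htT
    · obtain ⟨L, hL⟩ := hx.2 t ⟨ht0, htT⟩
      refine ⟨L, hL.congr' ?_⟩
      filter_upwards [Ioo_mem_nhdsLT ht0] with s hs
      rw [extFn_of_mem_Icc ⟨hs.1.le, hs.2.le.trans htT⟩]
    · refine ⟨x T, tendsto_const_nhds.congr' ?_⟩
      filter_upwards [Ioo_mem_nhdsLT htT] with s hs
      rw [extFn_of_nonneg (hT.trans hs.1.le), min_eq_right hs.1.le]

lemma IsCadlagOn.comp_strictMono {g e : ℝ → ℝ} (hg : IsCadlagOn univ g) (he : Continuous e)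
    (hmono : StrictMono e) : IsCadlagOn univ (g ∘ e) := by
  intro t _
  have hr : Tendsto e (𝓝[>] t) (𝓝[>] (e t)) :=
    tendsto_nhdsWithin_of_tendsto_nhds_of_eventually_within _
      ((he.tendsto t).mono_left nhdsWithin_le_nhds)
      (eventually_nhdsWithin_of_forall fun s hs => hmono hs)
  have hl : Tendsto e (𝓝[<] t) (𝓝[<] (e t)) :=
    tendsto_nhdsWithin_of_tendsto_nhds_of_eventually_within _
      ((he.tendsto t).mono_left nhdsWithin_le_nhds)
      (eventually_nhdsWithin_of_forall fun s hs => hmono hs)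
  obtain ⟨hgr, L, hgl⟩ := hg (e t) trivial
  exact ⟨hgr.tendsto.comp hr, L, hgl.comp hl⟩

lemma exists_tendsto_of_uniform_approx {α β : Type*} [PseudoMetricSpace β] [CompleteSpace β]
    {l : Filter α} [l.NeBot] {F : ℕ → α → β} {f : α → β} {c : ℕ → β} {e : ℕ → ℝ}
    (he : Tendsto e atTop (𝓝 0)) (hF : ∀ k, Tendsto (F k) l (𝓝 (c k)))
    (hfF : ∀ k, ∀ᶠ s in l, dist (f s) (F k s) ≤ e k) :
    ∃ L, Tendsto c atTop (𝓝 L) ∧ Tendsto f l (𝓝 L) := by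
  have hc : ∀ j k, dist (c j) (c k) ≤ e j + e k := fun j k =>
    le_of_tendsto ((hF j).dist (hF k)) (((hfF j).and (hfF k)).mono fun s hs =>
      (dist_triangle_left _ _ (f s)).trans (add_le_add hs.1 hs.2))
  obtain ⟨L, hL⟩ := cauchySeq_tendsto_of_complete (Metric.cauchySeq_iff'.2 fun ε hε => by
    obtain ⟨N, hN⟩ := eventually_atTop.1 (he.eventually (gt_mem_nhds (half_pos hε)))
    exact ⟨N, fun n hn => (hc n N).trans_lt (by linarith [hN n hn, hN N le_rfl])⟩)
  refine ⟨L, hL, Metric.tendsto_nhds.2 fun ε hε => ?_⟩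
  obtain ⟨k, hek, hckL⟩ := ((he.eventually (gt_mem_nhds (by positivity : 0 < ε / 3))).and
    (Metric.tendsto_nhds.1 hL (ε / 3) (by positivity))).exists
  filter_upwards [hfF k, Metric.tendsto_nhds.1 (hF k) (ε / 3) (by positivity)] with s h1 h2
  linarith [dist_triangle4 (f s) (F k s) (c k) L]

lemma IsCadlagOn.of_uniform_approx {s : Set ℝ} {F : ℕ → ℝ → ℝ} {f : ℝ → ℝ} {e : ℕ → ℝ}
    (hs : IsOpen s) (hF : ∀ k, IsCadlagOn s (F k)) (he : Tendsto e atTop (𝓝 0))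
    (hfF : ∀ k, ∀ t ∈ s, dist (f t) (F k t) ≤ e k) : IsCadlagOn s f := by
  intro t ht
  have hev : ∀ l ≤ 𝓝 t, ∀ k, ∀ᶠ u in l, dist (f u) (F k u) ≤ e k := fun l hl k =>
    hl (mem_of_superset (hs.mem_nhds ht) (hfF k))
  constructor
  · obtain ⟨L, hcL, hfL⟩ := exists_tendsto_of_uniform_approx he (fun k => (hF k t ht).1)
      (hev _ nhdsWithin_le_nhds)
    have : Tendsto (fun k => F k t) atTop (𝓝 (f t)) := tendsto_iff_dist_tendsto_zero.2
      (squeeze_zero (fun _ => dist_nonneg) (fun k => dist_comm (F k t) (f t) ▸ hfF k t ht) he)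
    rwa [tendsto_nhds_unique hcL this] at hfL
  · choose c hc using fun k => (hF k t ht).2
    obtain ⟨L, -, hfL⟩ := exists_tendsto_of_uniform_approx he hc (hev _ nhdsWithin_le_nhds)
    exact ⟨L, hfL⟩

/-! ### Completeness -/

def compTail (f : ℕ → ℝ → ℝ) (k : ℕ) : ℕ → ℝ → ℝ
  | 0 => id
  | j + 1 => f (k + j) ∘ compTail f k j

lemma compTail_succ' (f : ℕ → ℝ → ℝ) (k j : ℕ) :
    compTail f k (j + 1) = compTail f (k + 1) j ∘ f k := by
  induction j with
  | zero => rfl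
  | succ j ih =>
    change f (k + (j + 1)) ∘ compTail f k (j + 1) = (f (k + 1 + j) ∘ compTail f (k + 1) j) ∘ f k
    rw [ih, show k + (j + 1) = k + 1 + j by ring]
    rfl

/-- `μ k` is the limit of `compTail f k j` as `j → ∞`. -/
lemma exists_isTimeChange_lim_compTail {a b : ℝ} (hab : a ≤ b) {f : ℕ → ℝ → ℝ} {r : ℕ → ℝ}
    (hf : ∀ k, IsTimeChange a b (r k) (f k)) (hr : ∀ k, r k ≤ (1 / 2) ^ k) :
    ∃ μ : ℕ → ℝ → ℝ, (∀ k, IsTimeChange a b (2 * (1 / 2) ^ k) (μ k)) ∧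
      ∀ k t, μ k t = μ (k + 1) (f k t) := by
  have hsum : ∀ k j, ∑ i ∈ Finset.range j, r (k + i) ≤ 2 * (1 / 2) ^ k := fun k j =>
    calc ∑ i ∈ Finset.range j, r (k + i) ≤ ∑ i ∈ Finset.range j, (1 / 2 : ℝ) ^ k * (1 / 2) ^ i :=
          Finset.sum_le_sum fun i _ => (hr _).trans_eq (pow_add _ _ _)
      _ = (1 / 2) ^ k * ∑ i ∈ Finset.range j, (1 / 2 : ℝ) ^ i := (Finset.mul_sum _ _ _).symm
      _ ≤ (1 / 2) ^ k * 2 := mul_le_mul_of_nonneg_left (sum_geometric_two_le j) (by positivity)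
      _ = 2 * (1 / 2) ^ k := mul_comm _ _
  have hD : ∀ k j, IsTimeChange a b (2 * (1 / 2) ^ k) (compTail f k j) := by
    intro k j
    refine IsTimeChange.mono ?_ (hsum k j)
    induction j with
    | zero => exact (by simpa using isTimeChange_id a b : IsTimeChange a b _ id)
    | succ j ih => rw [Finset.sum_range_succ, add_comm]; exact (hf (k + j)).comp ih
  have hcauchy : ∀ k t, CauchySeq fun j => compTail f k j t := fun k t =>
    cauchySeq_of_le_geometric (1 / 2) (2 * (b - a) * (1 / 2) ^ k) (by norm_num) fun j => by
      have hr0 := (hf (k + j)).nonneg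
      have hr1 : r (k + j) ≤ 1 := (hr _).trans (pow_le_one₀ (by norm_num) (by norm_num))
      have hexp : exp (r (k + j)) - 1 ≤ 2 * r (k + j) := by
        have := abs_exp_sub_one_le (x := r (k + j)) (by rwa [abs_of_nonneg hr0])
        rw [abs_of_nonneg hr0] at this
        exact (le_abs_self _).trans this
      rw [dist_comm, Real.dist_eq]
      calc |f (k + j) (compTail f k j t) - compTail f k j t|
          ≤ (exp (r (k + j)) - 1) * (b - a) := (hf (k + j)).abs_sub_self_le hab _
        _ ≤ 2 * (1 / 2) ^ (k + j) * (b - a) :=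
          mul_le_mul_of_nonneg_right (by linarith [hr (k + j)]) (sub_nonneg.2 hab)
        _ = 2 * (b - a) * (1 / 2) ^ k * (1 / 2) ^ j := by rw [pow_add]; ring
  choose μ hμ using fun k t => cauchySeq_tendsto_of_complete (hcauchy k t)
  refine ⟨μ, fun k => IsTimeChange.of_tendsto (hD k) (hμ k), fun k t => ?_⟩
  refine tendsto_nhds_unique ((hμ k t).comp (tendsto_add_atTop_nat 1)) ?_
  simpa only [Function.comp_def, compTail_succ'] using hμ (k + 1) (f k t)

/-- As `ν k → id`, values left of `0` vanish in the limit and values right of `T` agree with the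
value at `b`; right continuity at `T` extends this to `T`. -/
lemma eqOn_extFn_of_tendsto {T a b : ℝ} (haT : a ≤ T) (hT : 0 ≤ T) (hTb : T < b)
    {u ν : ℕ → ℝ → ℝ} {z : ℝ → ℝ} (hν : ∀ t, Tendsto (fun k => ν k t) atTop (𝓝 t))
    (hνb : ∀ k, ν k b = b)
    (hz : ∀ t ∈ Icc a b, Tendsto (fun k => extFn T (u k) (ν k t)) atTop (𝓝 (z t)))
    (hzT : ContinuousWithinAt z (Ioi T) T) : EqOn (extFn T z) z (Icc a b) := by
  intro t ht
  rcases lt_or_ge t 0 with h0 | h0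
  · rw [extFn_of_neg h0]
    refine tendsto_nhds_unique (tendsto_const_nhds.congr' ?_) (hz t ht)
    filter_upwards [(hν t).eventually (gt_mem_nhds h0)] with k hk
    rw [extFn_of_neg hk]
  rw [extFn_of_nonneg h0]
  rcases le_or_gt t T with htT | htT
  · rw [min_eq_left htT]
  have hafter : ∀ k s, T ≤ s → extFn T (u k) s = u k T := fun k s hs => by
    rw [extFn_of_nonneg (hT.trans hs), min_eq_right hs]
  have hconst : ∀ s ∈ Ioc T b, z s = z b := fun s hs => by
    refine tendsto_nhds_unique (hz s ⟨haT.trans hs.1.le, hs.2⟩)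
      ((hz b ⟨haT.trans hTb.le, le_rfl⟩).congr' ?_)
    filter_upwards [(hν s).eventually (lt_mem_nhds hs.1)] with k hk
    rw [hνb, hafter k b hTb.le, hafter k _ hk.le]
  have hzTb : z T = z b := tendsto_nhds_unique hzT (tendsto_const_nhds.congr' (by
    filter_upwards [Ioo_mem_nhdsGT hTb] with s hs
    exact (hconst s ⟨hs.1, hs.2.le⟩).symm))
  rw [min_eq_right htT.le, hzTb, hconst t ⟨htT, ht.2⟩]

theorem exists_cadlag_dmJ_le {T ε : ℝ} (hT : 0 ≤ T) (hε : 0 < ε) {u : ℕ → ℝ → ℝ}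
    (hu : ∀ k, Cadlag T (u k)) (hd : ∀ k, dmJ T ε (u k) (u (k + 1)) < (1 / 2) ^ k) :
    ∃ z, Cadlag T z ∧ ∀ k, dmJ T ε (u k) z ≤ 2 * (1 / 2) ^ k := by
  set a := -ε
  set b := T + ε
  have hab : a ≤ b := by linarith
  set y : ℕ → ℝ → ℝ := fun k => extFn T (u k)
  choose r hr f hf hfy using fun k => exists_isTimeChange_of_dSk_lt hab
    ((hu k).skSet_extFn_nonempty (hu (k + 1)) hT a b) (hd k)
  obtain ⟨μ, hμ, hμf⟩ := exists_isTimeChange_lim_compTail hab hf fun k => (hr k).le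
  choose ν hν hνμ hμν using fun k => (hμ k).exists_inverse
  have hZ : ∀ t ∈ Icc a b, ∀ k, dist (y k (ν k t)) (y (k + 1) (ν (k + 1) t)) ≤ 2 / 2 / 2 ^ k := by
    intro t ht k
    have hs := (hν k).mapsTo ht
    have : ν (k + 1) t = f k (ν k t) := by
      conv_lhs => rw [← hμν k t, hμf k (ν k t)]
      exact hνμ (k + 1) _
    rw [this, Real.dist_eq]
    exact (hfy k _ hs).trans ((hr k).le.trans_eq (by rw [one_div_pow]; ring))
  set z : ℝ → ℝ := fun t => limUnder atTop fun k => y k (ν k t)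
  have hz : ∀ t ∈ Icc a b, Tendsto (fun k => y k (ν k t)) atTop (𝓝 (z t)) := fun t ht =>
    tendsto_nhds_limUnder (cauchySeq_tendsto_of_complete (cauchySeq_of_le_geometric_two (hZ t ht)))
  have hzy : ∀ k, ∀ t ∈ Icc a b, dist (y k (ν k t)) (z t) ≤ 2 * (1 / 2) ^ k := fun k t ht =>
    (dist_le_of_le_geometric_two_of_tendsto (hZ t ht) (hz t ht) k).trans_eq
      (by rw [one_div_pow]; ring)
  have hsize : Tendsto (fun k : ℕ => 2 * (1 / 2 : ℝ) ^ k) atTop (𝓝 0) := by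
    simpa using (tendsto_pow_atTop_nhds_zero_of_lt_one (by norm_num)
      (by norm_num : (1 / 2 : ℝ) < 1)).const_mul 2
  have hzc : IsCadlagOn (Ioo a b) z := IsCadlagOn.of_uniform_approx isOpen_Ioo
    (fun k => (((hu k).isCadlagOn_extFn hT).comp_strictMono (hν k).continuous
      (hν k).strictMono).mono (subset_univ _)) hsize
    fun k t ht => by rw [dist_comm]; exact hzy k t (Ioo_subset_Icc_self ht)
  have hνt : ∀ t, Tendsto (fun k => ν k t) atTop (𝓝 t) := fun t =>
    tendsto_iff_dist_tendsto_zero.2 (squeeze_zero (fun _ => dist_nonneg)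
      (fun k => (hν k).abs_sub_self_le hab t) ((tendsto_exp_sub_one_mul (b - a)).comp hsize))
  have hext : EqOn (extFn T z) z (Icc a b) := eqOn_extFn_of_tendsto (by linarith) hT
    (by linarith) hνt (fun k => (hν k).apply_right) hz (hzc T ⟨by linarith, by linarith⟩).1
  refine ⟨z, hzc.cadlag fun t ht => ⟨by linarith [ht.1], by linarith [ht.2]⟩, fun k =>
    (hμ k).dSk_le fun t ht => ?_⟩
  have hs := (hμ k).mapsTo ht
  have := hzy k _ hs
  rwa [hνμ k t, Real.dist_eq, ← hext hs] at this

/-! ### Separability -/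

def hat (w s : ℝ) : ℝ := max 0 (1 - |s| / w)

section hat

variable {w : ℝ}

lemma hat_zero : hat w 0 = 1 := by simp [hat]

lemma hat_eq_zero (hw : 0 < w) {s : ℝ} (hs : w ≤ |s|) : hat w s = 0 :=
  max_eq_left (by rw [sub_nonpos, le_div_iff₀ hw]; linarith)

lemma abs_hat_sub_hat_le (hw : 0 < w) (s s' : ℝ) : |hat w s - hat w s'| ≤ |s - s'| / w :=
  calc |hat w s - hat w s'| ≤ |(1 - |s| / w) - (1 - |s'| / w)| := by
        simp only [hat]; rw [max_comm 0, max_comm 0]; exact abs_max_sub_max_le_abs _ _ _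
    _ = |(|s'| - |s|)| / w := by
        rw [show (1 - |s| / w) - (1 - |s'| / w) = (|s'| - |s|) / w by ring, abs_div, abs_of_pos hw]
    _ ≤ |s - s'| / w := div_le_div_of_nonneg_right
        ((abs_abs_sub_abs_le_abs_sub _ _).trans_eq (abs_sub_comm _ _)) hw.le

end hat

/-- Add to the identity multiples of hat functions centred at the points of `P`, narrower than
their mutual distances and their distances to `a` and `b`. -/
lemma exists_isTimeChange_move {a b κ : ℝ} {P : Finset ℝ} (hP : ∀ p ∈ P, p ∈ Ioo a b)
    (hκ : 0 < κ) (hκ' : κ ≤ 1 / 2) :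
    ∃ γ > 0, ∀ c : ℝ → ℝ, (∀ p ∈ P, |c p| ≤ γ) →
      ∃ f, IsTimeChange a b (2 * κ) f ∧ ∀ p ∈ P, f p = p + c p := by
  have hev : ∀ᶠ w in 𝓝[>] (0 : ℝ), w ∈ Ioi 0 ∧
      ∀ p ∈ P, w ≤ p - a ∧ w ≤ b - p ∧ ∀ q ∈ P, q ≠ p → w ≤ |p - q| := by
    refine eventually_mem_nhdsWithin.and
      (nhdsWithin_le_nhds ((eventually_all_finset P).2 fun p hp => ?_))
    refine (eventually_le_nhds (sub_pos.2 (hP p hp).1)).and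
      ((eventually_le_nhds (sub_pos.2 (hP p hp).2)).and ((eventually_all_finset P).2 fun q _ => ?_))
    by_cases hqp : q = p
    · exact Eventually.of_forall fun _ h => absurd hqp h
    · exact (eventually_le_nhds (abs_pos.2 (sub_ne_zero.2 (Ne.symm hqp)))).mono fun _ h _ => h
  obtain ⟨w, hw, hwP⟩ := hev.exists
  have hw : 0 < w := hw
  refine ⟨κ * w / (P.card + 1), by positivity, fun c hc => ?_⟩
  refine ⟨fun t => t + ∑ p ∈ P, c p * hat w (t - p),
    isTimeChange_of_abs_sub_sub_le (fun t ht => ?_) hκ' fun s t hst => ?_, fun p hp => ?_⟩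
  · have hzero : ∀ p ∈ P, hat w (t - p) = 0 := fun p hp => by
      refine hat_eq_zero hw ?_
      rcases le_or_gt t a with hta | hta
      · rw [abs_sub_comm, abs_of_pos (by linarith [(hP p hp).1])]
        linarith [(hwP p hp).1]
      · have htb : b ≤ t := not_lt.1 fun htb => ht ⟨hta, htb⟩
        rw [abs_of_pos (by linarith [(hP p hp).2])]
        linarith [(hwP p hp).2.1]
    change t + ∑ p ∈ P, c p * hat w (t - p) = t
    rw [Finset.sum_eq_zero fun p hp => by rw [hzero p hp, mul_zero], add_zero]
  · have hts : 0 < t - s := sub_pos.2 hst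
    have hn : (0 : ℝ) ≤ P.card := Nat.cast_nonneg _
    calc |t + ∑ p ∈ P, c p * hat w (t - p) - (s + ∑ p ∈ P, c p * hat w (s - p)) - (t - s)|
        = |∑ p ∈ P, c p * (hat w (t - p) - hat w (s - p))| := by
          simp only [mul_sub, Finset.sum_sub_distrib]; ring_nf
      _ ≤ ∑ p ∈ P, |c p * (hat w (t - p) - hat w (s - p))| := Finset.abs_sum_le_sum_abs _ _
      _ ≤ ∑ p ∈ P, κ * w / (P.card + 1) * ((t - s) / w) := Finset.sum_le_sum fun p hp => by
          rw [abs_mul]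
          refine mul_le_mul (hc p hp) ?_ (abs_nonneg _) (by positivity)
          simpa [abs_of_pos hts] using abs_hat_sub_hat_le hw (t - p) (s - p)
      _ = κ * (t - s) * (P.card / (P.card + 1)) := by
          rw [Finset.sum_const, nsmul_eq_mul]; field_simp
      _ ≤ κ * (t - s) :=
          mul_le_of_le_one_right (by positivity) (div_le_one_of_le₀ (by linarith) (by positivity))
  · change p + ∑ q ∈ P, c q * hat w (p - q) = p + c p
    rw [Finset.sum_eq_single p (fun q hq hqp => by
      rw [hat_eq_zero hw ((hwP p hp).2.2 q hq hqp), mul_zero]) (fun h => absurd hp h),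
      sub_self, hat_zero, mul_one]

lemma isCadlagOn_comp_filter {ι : Type*} (Q : Finset ι) (q : ι → ℝ) (G : Finset ι → ℝ) :
    IsCadlagOn univ fun v => G (Q.filter fun i => q i ≤ v) := by
  intro v _
  have hR : ∀ᶠ s in 𝓝[>] v, Q.filter (fun i => q i ≤ s) = Q.filter fun i => q i ≤ v := by
    refine ((eventually_all_finset Q).2 fun i _ => ?_).mono fun s hs => Finset.filter_congr hs
    rcases le_or_gt (q i) v with h | h
    · filter_upwards [eventually_mem_nhdsWithin] with s (hs : v < s)
      exact ⟨fun _ => h, fun _ => h.trans hs.le⟩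
    · filter_upwards [nhdsWithin_le_nhds (eventually_lt_nhds h)] with s hs
      exact ⟨fun h' => absurd (h'.trans_lt hs) (lt_irrefl _), fun h' => absurd h' (not_le.2 h)⟩
  have hL : ∀ᶠ s in 𝓝[<] v, Q.filter (fun i => q i ≤ s) = Q.filter fun i => q i < v := by
    refine ((eventually_all_finset Q).2 fun i _ => ?_).mono fun s hs => Finset.filter_congr hs
    rcases lt_or_ge (q i) v with h | h
    · filter_upwards [nhdsWithin_le_nhds (eventually_gt_nhds h)] with s hs
      exact ⟨fun _ => h, fun _ => hs.le⟩
    · filter_upwards [eventually_mem_nhdsWithin] with s (hs : s < v)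
      exact ⟨fun h' => absurd (h'.trans_lt (hs.trans_le h)) (lt_irrefl _),
        fun h' => absurd h' (not_lt.2 h)⟩
  exact ⟨tendsto_const_nhds.congr' (hR.mono fun s hs => congrArg G hs.symm),
    G (Q.filter fun i => q i < v),
    tendsto_const_nhds.congr' (hL.mono fun s hs => congrArg G hs.symm)⟩

def ratStep (Q : Finset ℚ) (ρ : ℚ → ℚ) (v : ℝ) : ℝ :=
  if h : (Q.filter fun q : ℚ => (q : ℝ) ≤ v).Nonempty then
    ρ ((Q.filter fun q : ℚ => (q : ℝ) ≤ v).max' h)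
  else 0

def ratSteps : Set (ℝ → ℝ) := Set.range fun p : Finset ℚ × (ℚ →₀ ℚ) => ratStep p.1 p.2

lemma ratSteps_countable : ratSteps.Countable := Set.countable_range _

lemma isCadlagOn_ratStep (Q : Finset ℚ) (ρ : ℚ → ℚ) : IsCadlagOn univ (ratStep Q ρ) :=
  isCadlagOn_comp_filter Q (fun q : ℚ => (q : ℝ)) fun S =>
    if h : S.Nonempty then (ρ (S.max' h) : ℝ) else 0

lemma cadlag_of_mem_ratSteps {T : ℝ} {y : ℝ → ℝ} (hy : y ∈ ratSteps) : Cadlag T y := by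
  obtain ⟨⟨Q, ρ⟩, rfl⟩ := hy
  exact (isCadlagOn_ratStep Q ρ).cadlag (subset_univ _)

lemma ratStep_mem_ratSteps (Q : Finset ℚ) (ρ : ℚ → ℚ) : ratStep Q ρ ∈ ratSteps := by
  refine ⟨(Q, Finsupp.onFinset Q (fun q => if q ∈ Q then ρ q else 0) fun q hq => ?_),
    funext fun v => ?_⟩
  · by_contra h
    exact hq (if_neg h)
  · simp only [ratStep]
    split_ifs with h
    · rw [Finsupp.onFinset_apply, if_pos (Finset.mem_of_mem_filter _ (Finset.max'_mem _ h))]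
    · rfl

lemma ratStep_eq {Q : Finset ℚ} {ρ : ℚ → ℚ} {q : ℚ} {v : ℝ} (hq : q ∈ Q) (hqv : (q : ℝ) ≤ v)
    (hmax : ∀ q' ∈ Q, (q' : ℝ) ≤ v → q' ≤ q) : ratStep Q ρ v = ρ q := by
  have hmem : q ∈ Q.filter fun q : ℚ => (q : ℝ) ≤ v := Finset.mem_filter.2 ⟨hq, hqv⟩
  rw [ratStep, dif_pos ⟨q, hmem⟩, le_antisymm (Finset.max'_le _ _ _ fun q' hq' =>
    hmax q' (Finset.mem_filter.1 hq').1 (Finset.mem_filter.1 hq').2) (Finset.le_max' _ _ hmem)]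

theorem Cadlag.exists_mem_ratSteps_dmJ_lt {T ε : ℝ} {x : ℝ → ℝ} (hx : Cadlag T x) (hT : 0 ≤ T)
    (hε : 0 < ε) {δ : ℝ} (hδ : 0 < δ) : ∃ y ∈ ratSteps, dmJ T ε x y < δ := by
  obtain ⟨P, h0, -, hPsub, hosc⟩ := hx.exists_isOscPartition hT (by positivity : 0 < δ / 4)
  obtain ⟨γ, hγ, hmove⟩ := exists_isTimeChange_move (a := -ε) (b := T + ε) (P := P)
    (fun p hp => ⟨by linarith [(hPsub p hp).1], by linarith [(hPsub p hp).2]⟩)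
    (lt_min one_half_pos (by positivity : 0 < δ / 4)) (min_le_left _ _)
  have hq : ∀ p : ℝ, ∃ q : ℚ, p - γ ≤ q ∧ (q : ℝ) ≤ p ∧ (p = 0 → q = 0) := fun p => by
    by_cases hp : p = 0
    · exact ⟨0, by simp [hp, hγ.le], by simp [hp], fun _ => rfl⟩
    · obtain ⟨q, h1, h2⟩ := exists_rat_btwn (show p - γ < p by linarith)
      exact ⟨q, h1.le, h2.le, fun h => absurd h hp⟩
  choose q hq1 hq2 hq3 using hq
  obtain ⟨f, hf, hfP⟩ := hmove (fun p => q p - p) fun p _ => by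
    rw [abs_le]; constructor <;> linarith [hq1 p, hq2 p]
  simp only [add_sub_cancel] at hfP
  obtain ⟨g, -, hgf, -⟩ := hf.exists_inverse
  have hv : ∀ t, ∃ v : ℚ, |x t - v| ≤ δ / 4 := fun t => by
    obtain ⟨v, h1, h2⟩ := exists_rat_btwn (show x t < x t + δ / 4 by linarith)
    exact ⟨v, by rw [abs_le]; constructor <;> linarith⟩
  choose v hv using hv
  refine ⟨ratStep (P.image q) (fun q' => v (g q')), ratStep_mem_ratSteps _ _,
    lt_of_le_of_lt ((hf.mono (r' := δ / 2) (by linarith [min_le_right (1 / 2 : ℝ) (δ / 4)])).dSk_le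
      fun t ht => ?_) (half_lt_self hδ)⟩
  have hf0 : f 0 = 0 := by rw [hfP 0 h0, hq3 0 rfl, Rat.cast_zero]
  rcases lt_or_ge t 0 with ht0 | ht0
  · rw [extFn_of_neg ht0, extFn_of_neg (hf0 ▸ hf.strictMono ht0), sub_zero, abs_zero]
    positivity
  set t' := min t T
  have ht' : t' ∈ Icc 0 T := ⟨le_min ht0 hT, min_le_right _ _⟩
  obtain ⟨hpP, hpt'⟩ := floorIn_mem ⟨0, h0, ht'.1⟩
  set p := floorIn P t'
  have hstep : ratStep (P.image q) (fun q' => v (g q')) (min (f t) T) = v p := by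
    rw [ratStep_eq (Finset.mem_image_of_mem q hpP), ← hfP p hpP, hgf]
    · rw [← hfP p hpP]
      exact le_min (hf.strictMono.monotone (hpt'.trans (min_le_left _ _)))
        ((hfP p hpP ▸ hq2 p).trans (hPsub p hpP).2)
    · intro q' hq' hq't
      obtain ⟨p', hp', rfl⟩ := Finset.mem_image.1 hq'
      rw [← Rat.cast_le (K := ℝ), ← hfP p hpP, ← hfP p' hp']
      rw [← hfP p' hp'] at hq't
      refine hf.strictMono.monotone (le_floorIn hp' (le_min ?_ (hPsub p' hp').2))
      exact hf.strictMono.le_iff_le.1 (hq't.trans (min_le_left _ _))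
  rw [extFn_of_nonneg ht0, extFn_of_nonneg (hf0 ▸ hf.strictMono.monotone ht0), hstep]
  calc |x t' - v p| ≤ |x t' - x p| + |x p - v p| := abs_sub_le _ _ _
    _ ≤ δ / 2 := by linarith [hosc t' ht', hv p]

/-! ### The space D([0, T]) -/

lemma Cadlag.dmJ_eq_zero_iff {T ε : ℝ} {x y : ℝ → ℝ} (hx : Cadlag T x) (hy : Cadlag T y)
    (hT : 0 ≤ T) (hε : 0 ≤ ε) : dmJ T ε x y = 0 ↔ EqOn x y (Icc 0 T) := by
  refine ⟨fun h t ht => ?_, fun h => ?_⟩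
  · have := eqOn_of_dSk_eq_zero (by linarith) (hx.skSet_extFn_nonempty hy hT _ _)
      (fun t _ => (hx.isCadlagOn_extFn hT t trivial).1)
      (fun t _ => (hy.isCadlagOn_extFn hT t trivial).1) h
      (show t ∈ Icc (-ε) (T + ε) from ⟨by linarith [ht.1], by linarith [ht.2]⟩)
    rwa [extFn_of_mem_Icc ht, extFn_of_mem_Icc ht] at this
  · rw [dmJ, extFn_congr hT h]
    exact dSk_self

/-- `D([0, T])` with the `mJ₁` distance; functions agreeing on `[0, T]` are at distance `0`, so this
is only a pseudometric space. -/
structure CadlagSpace (T ε : ℝ) where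
  toFun : ℝ → ℝ
  cadlag : Cadlag T toFun

namespace CadlagSpace

variable {T ε : ℝ} [hT : Fact (0 ≤ T)] [hε : Fact (0 < ε)]

instance : PseudoMetricSpace (CadlagSpace T ε) where
  dist x y := dmJ T ε x.toFun y.toFun
  dist_self _ := dSk_self
  dist_comm _ _ := dSk_comm (by linarith [hT.out, hε.out])
  dist_triangle x y z := dSk_triangle (by linarith [hT.out, hε.out])
    (x.cadlag.skSet_extFn_nonempty y.cadlag hT.out _ _)
    (y.cadlag.skSet_extFn_nonempty z.cadlag hT.out _ _)

instance : CompleteSpace (CadlagSpace T ε) := by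
  refine Metric.complete_of_convergent_controlled_sequences (fun k => (1 / 2) ^ k)
    (fun _ => by positivity) fun u hu => ?_
  obtain ⟨z, hz, hdist⟩ := exists_cadlag_dmJ_le hT.out hε.out (fun k => (u k).cadlag)
    fun k => hu k k (k + 1) le_rfl k.le_succ
  refine ⟨⟨z, hz⟩, tendsto_iff_dist_tendsto_zero.2 (squeeze_zero (fun _ => dist_nonneg) hdist ?_)⟩
  simpa using (tendsto_pow_atTop_nhds_zero_of_lt_one (by norm_num)
    (by norm_num : (1 / 2 : ℝ) < 1)).const_mul 2

end CadlagSpace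

/-- Theorem 4.8 (i): `(D([0,T]), d)` is a Polish (complete separable) metric space;
here two elements of `D([0,T])` are identified when they agree on `[0,T]`. -/
theorem stmt8 (T : ℝ) (hT : 0 < T) (ε : ℝ) (hε : 0 < ε) :
    (∀ x y : ℝ → ℝ, Cadlag T x → Cadlag T y → 0 ≤ dmJ T ε x y) ∧
    (∀ x y : ℝ → ℝ, Cadlag T x → Cadlag T y →
      (dmJ T ε x y = 0 ↔ ∀ t ∈ Set.Icc (0:ℝ) T, x t = y t)) ∧
    (∀ x y : ℝ → ℝ, Cadlag T x → Cadlag T y → dmJ T ε x y = dmJ T ε y x) ∧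
    (∀ x y z : ℝ → ℝ, Cadlag T x → Cadlag T y → Cadlag T z →
      dmJ T ε x z ≤ dmJ T ε x y + dmJ T ε y z) ∧
    (∀ x : ℕ → ℝ → ℝ, (∀ n, Cadlag T (x n)) →
      (∀ δ > (0:ℝ), ∃ N : ℕ, ∀ m ≥ N, ∀ n ≥ N, dmJ T ε (x m) (x n) < δ) →
      ∃ x₀ : ℝ → ℝ, Cadlag T x₀ ∧
        Filter.Tendsto (fun n => dmJ T ε (x n) x₀) Filter.atTop (nhds 0)) ∧
    (∃ C : Set (ℝ → ℝ), C.Countable ∧ (∀ y ∈ C, Cadlag T y) ∧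
      ∀ x : ℝ → ℝ, Cadlag T x → ∀ δ > (0:ℝ), ∃ y ∈ C, dmJ T ε x y < δ) := by
  have : Fact (0 ≤ T) := ⟨hT.le⟩
  have : Fact (0 < ε) := ⟨hε⟩
  refine ⟨fun _ _ _ _ => dSk_nonneg, fun x y hx hy => hx.dmJ_eq_zero_iff hy hT.le hε.le,
    fun _ _ _ _ => dSk_comm (by linarith), fun x y z hx hy hz => ?_, fun x hx hcauchy => ?_,
    ratSteps, ratSteps_countable, fun _ => cadlag_of_mem_ratSteps,
    fun x hx δ hδ => hx.exists_mem_ratSteps_dmJ_lt hT.le hε hδ⟩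
  · exact dist_triangle (⟨x, hx⟩ : CadlagSpace T ε) ⟨y, hy⟩ ⟨z, hz⟩
  · obtain ⟨x₀, hx₀⟩ := cauchySeq_tendsto_of_complete
      (Metric.cauchySeq_iff.2 hcauchy : CauchySeq fun n => (⟨x n, hx n⟩ : CadlagSpace T ε))
    exact ⟨x₀.toFun, x₀.cadlag, tendsto_iff_dist_tendsto_zero.1 hx₀⟩

end
end

section
/- Theorem 5.7 (multidimensional compactness criterion): Let K ⊆ D([0,∞); ℝ^d) and for i = 1,…,d let K^i = { x^i : x ∈ K } ⊆ D([0,∞)) be the family of i-th coordinate functions. Then K is relatively S-compact in D([0,∞); ℝ^d) (i.e. every sequence in K admits a subsequence ⇒*_S-converging in D([0,∞); ℝ^d) to some element of D([0,∞); ℝ^d)) if and only if each K^i, i = 1,…,d, is relatively S-compact in D([0,∞)) (every sequence in K^i admits a subsequence ⇒*_S-converging in D([0,∞)) to some element of D([0,∞))). -/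
open MeasureTheory Filter Set Topology

noncomputable section

/-- `x : [0,∞) → ℝ` is càdlàg: right-continuous at every `t ≥ 0`, with left
limits at every `t > 0`. -/
def CadlagInf (x : ℝ → ℝ) : Prop :=
  (∀ t : ℝ, 0 ≤ t → Filter.Tendsto x (nhdsWithin t (Set.Ioi t)) (nhds (x t))) ∧
  (∀ t : ℝ, 0 < t → ∃ L : ℝ, Filter.Tendsto x (nhdsWithin t (Set.Iio t)) (nhds L))

/-- `x_n ⇒*_S x₀` in `D([0,∞))`: for every `T > 0` and all `A_n, A₀ ∈ 𝔸([0,T])`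
with `A_n →_τ A₀`, `∫_0^T x_n dA_n → ∫_0^T x₀ dA₀`. -/
def SStarConvInf (x : ℕ → ℝ → ℝ) (x₀ : ℝ → ℝ) : Prop :=
  ∀ T : ℝ, 0 < T → ∀ A : ℕ → ℝ → ℝ, ∀ A₀ : ℝ → ℝ,
    (∀ n, MemA T (A n)) → MemA T A₀ → TauConv T A A₀ →
    Filter.Tendsto (fun n => intD T (x n) (A n)) Filter.atTop (nhds (intD T x₀ A₀))

/-- `⇒*_S` convergence on `D([0,∞))` passes to subsequences. -/
lemma sstar_sub (x : ℕ → ℝ → ℝ) (x₀ : ℝ → ℝ) (h : SStarConvInf x x₀)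
    (ψ : ℕ → ℕ) (hψ : StrictMono ψ) : SStarConvInf (fun k => x (ψ k)) x₀ := by
  intro T hT A' A₀ hA' hA₀ hτ
  classical
  set g : ℕ → ℕ := fun n => Nat.findGreatest (fun k => ψ k ≤ n) n with hgdef
  have hgψ : ∀ k, g (ψ k) = k := by
    intro k
    refine le_antisymm ?_ (Nat.le_findGreatest (hψ.id_le k) le_rfl)
    rcases Nat.eq_zero_or_pos (g (ψ k)) with h0 | h0
    · omega
    · have hp : ψ (Nat.findGreatest (fun j => ψ j ≤ ψ k) (ψ k)) ≤ ψ k :=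
        Nat.findGreatest_spec (P := fun j => ψ j ≤ ψ k) (hψ.id_le k) le_rfl
      exact (hψ.le_iff_le).mp hp
  have hgt : Filter.Tendsto g Filter.atTop Filter.atTop := by
    refine Filter.tendsto_atTop_atTop.mpr fun b => ⟨ψ b, fun n hn => ?_⟩
    exact Nat.le_findGreatest (le_trans (hψ.id_le b) hn) hn
  have hτ' : TauConv T (fun n => A' (g n)) A₀ := by
    refine ⟨fun u hu => hgt.eventually (hτ.1 u hu), ?_⟩
    obtain ⟨M, hM⟩ := hτ.2
    exact ⟨M, fun n => hM (g n)⟩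
  have key := h T hT (fun n => A' (g n)) A₀ (fun n => hA' (g n)) hA₀ hτ'
  have key2 := key.comp hψ.tendsto_atTop
  have heq : (fun k => intD T (x (ψ k)) (A' (g (ψ k)))) = fun k => intD T (x (ψ k)) (A' k) := by
    funext k; rw [hgψ]
  simpa [Function.comp_def, heq] using key2

lemma diag_extract (d : ℕ) (K : Set (ℝ → Fin d → ℝ))
    (h : ∀ i : Fin d, ∀ y : ℕ → ℝ → ℝ, (∀ n, ∃ x ∈ K, y n = fun t => x t i) →
      ∃ φ : ℕ → ℕ, StrictMono φ ∧ ∃ y₀ : ℝ → ℝ, CadlagInf y₀ ∧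
        SStarConvInf (fun k => y (φ k)) y₀)
    (x : ℕ → ℝ → Fin d → ℝ) (hx : ∀ n, x n ∈ K) :
    ∀ m : ℕ, ∃ φ : ℕ → ℕ, StrictMono φ ∧ ∀ i : Fin d, i.val < m →
      ∃ y₀, CadlagInf y₀ ∧ SStarConvInf (fun k t => x (φ k) t i) y₀ := by
  intro m
  induction m with
  | zero => exact ⟨id, strictMono_id, fun i hi => absurd hi (by omega)⟩
  | succ m ih =>
    obtain ⟨φ, hφ, hconv⟩ := ih
    by_cases hm : m < d
    · set i : Fin d := ⟨m, hm⟩ with hi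
      obtain ⟨ψ, hψ, y₀, hy₀c, hy₀⟩ := h i (fun n t => x (φ n) t i)
        (fun n => ⟨x (φ n), hx (φ n), rfl⟩)
      refine ⟨φ ∘ ψ, hφ.comp hψ, fun j hj => ?_⟩
      rcases Nat.lt_succ_iff_lt_or_eq.mp hj with hj' | hj'
      · obtain ⟨z, hzc, hz⟩ := hconv j hj'
        exact ⟨z, hzc, sstar_sub _ _ hz ψ hψ⟩
      · have hji : j = i := Fin.ext hj'
        subst hji
        exact ⟨y₀, hy₀c, hy₀⟩
    · exact ⟨φ, hφ, fun j hj => hconv j (by omega)⟩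

/-- Theorem 5.7: multidimensional criterion of relative `S`-compactness. -/
theorem stmt14 (d : ℕ) (K : Set (ℝ → Fin d → ℝ))
    (hK : ∀ x ∈ K, ∀ i : Fin d, CadlagInf (fun t => x t i)) :
    (∀ x : ℕ → ℝ → Fin d → ℝ, (∀ n, x n ∈ K) →
      ∃ φ : ℕ → ℕ, StrictMono φ ∧ ∃ x₀ : ℝ → Fin d → ℝ,
        (∀ i : Fin d, CadlagInf (fun t => x₀ t i)) ∧
        ∀ i : Fin d, SStarConvInf (fun k t => x (φ k) t i) (fun t => x₀ t i))
    ↔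
    (∀ i : Fin d, ∀ y : ℕ → ℝ → ℝ, (∀ n, ∃ x ∈ K, y n = fun t => x t i) →
      ∃ φ : ℕ → ℕ, StrictMono φ ∧ ∃ y₀ : ℝ → ℝ, CadlagInf y₀ ∧
        SStarConvInf (fun k => y (φ k)) y₀) := by
  constructor
  · intro h i y hy
    choose x' hmem heq using hy
    obtain ⟨φ, hφ, x₀, hx₀c, hx₀⟩ := h x' hmem
    refine ⟨φ, hφ, fun t => x₀ t i, hx₀c i, ?_⟩
    have : (fun k => y (φ k)) = fun k t => x' (φ k) t i := by
      funext k; exact heq (φ k)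
    rw [this]
    exact hx₀ i
  · intro h x hx
    obtain ⟨φ, hφ, hconv⟩ := diag_extract d K h x hx d
    choose y₀ hc hs using fun i : Fin d => hconv i i.isLt
    exact ⟨φ, hφ, fun t i => y₀ i t, fun i => hc i, fun i => hs i⟩

end
end

section
/- KVPK recipe (Theorem A.4): Let 𝒳 be a set equipped with an ℒ-convergence, i.e. a relation '(x_n) ⟶ x' between sequences in 𝒳 and points of 𝒳 such that: (i) each sequence converges to at most one limit; (ii) for every x ∈ 𝒳 the constant sequence (x, x, …) converges to x; (iii) if (x_n) ⟶ x and (x_{n_k}) is any subsequence, then (x_{n_k}) ⟶ x. Let τ be the sequential topology generated by ⟶: a set F ⊆ 𝒳 is τ-closed iff whenever x_n ∈ F for all n and (x_n) ⟶ x, then x ∈ F; τ-open sets are complements of τ-closed sets. Then for any sequence (x_n) and point x_0 in 𝒳, (x_n) converges to x_0 in the topology τ (i.e. every τ-open set containing x_0 contains x_n for all sufficiently large n) if and only if every subsequence of (x_n) contains a further subsequence (x_{n_{k_l}}) with (x_{n_{k_l}}) ⟶ x_0. -/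
/-!
The backward direction is immediate: if `x` met the closed set `Uᶜ` infinitely often, a
subsequence inside `Uᶜ` would have a further subsequence `⟶`-converging to `x₀ ∉ Uᶜ`.

For the forward direction, take a subsequence `y` of `x` with no further subsequence converging
to `x₀`. Discarding the finitely many terms equal to `x₀` and passing to a convergent subsequence
if there is one, we get a subsequence `v` whose subsequential limits form a subsingleton not
containing `x₀`. The set `F` of terms of `v` together with these limits is closed: a sequence in
`F` that `⟶`-converges either takes some value infinitely often (and converges to it), or has
finite fibres and then has a subsequence that is a subsequence of `v`. Since `x₀ ∉ F` but `F`
contains infinitely many terms of `x`, `x` does not converge to `x₀` in the topology.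
-/

open Filter Set

theorem exists_comp_eq_comp_of_finite_fibers {α : Type*} {u v : ℕ → α}
    (hu : ∀ m, u m ∈ range v) (hfib : ∀ c, (u ⁻¹' {c}).Finite) :
    ∃ σ ρ : ℕ → ℕ, StrictMono σ ∧ StrictMono ρ ∧ u ∘ σ = v ∘ ρ := by
  choose g hg using hu
  have hg_fib : ∀ i, (g ⁻¹' {i}).Finite := fun i =>
    (hfib (v i)).subset fun m (hm : g m = i) => by simp [← hg m, hm]
  have hg_tendsto : Tendsto g atTop atTop := Nat.cofinite_eq_atTop ▸
    Tendsto.cofinite_of_finite_preimage_singleton fun i => (hg_fib i).to_subtype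
  obtain ⟨σ, hσ, hgσ⟩ := strictMono_subseq_of_tendsto_atTop hg_tendsto
  exact ⟨σ, g ∘ σ, hσ, hgσ, funext fun k => (hg (σ k)).symm⟩

namespace LConvergence

variable {X : Type*} (conv : (ℕ → X) → X → Prop)

/-- The closed sets of the sequential topology generated by `conv`. -/
def IsLimitClosed (F : Set X) : Prop :=
  ∀ u : ℕ → X, (∀ n, u n ∈ F) → ∀ a, conv u a → a ∈ F

def subseqLimits (v : ℕ → X) : Set X :=
  {a | ∃ ψ : ℕ → ℕ, StrictMono ψ ∧ conv (v ∘ ψ) a}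

variable {conv}

theorem subseqLimits_comp_subset {v : ℕ → X} {σ : ℕ → ℕ} (hσ : StrictMono σ) :
    subseqLimits conv (v ∘ σ) ⊆ subseqLimits conv v :=
  fun _ ⟨ψ, hψ, h⟩ => ⟨σ ∘ ψ, hσ.comp hψ, h⟩

theorem subseqLimits_subset_singleton
    (h_unique : ∀ (x : ℕ → X) (a b : X), conv x a → conv x b → a = b)
    (h_sub : ∀ (x : ℕ → X) (a : X), conv x a →
      ∀ φ : ℕ → ℕ, StrictMono φ → conv (fun k => x (φ k)) a)
    {v : ℕ → X} {a : X} (ha : conv v a) :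
    subseqLimits conv v ⊆ {a} :=
  fun _ ⟨ψ, hψ, h⟩ => h_unique _ _ _ h (h_sub v a ha ψ hψ)

theorem mem_subseqLimits_of_infinite_fiber (h_const : ∀ a : X, conv (fun _ => a) a)
    {u : ℕ → X} {c : X} (hc : (u ⁻¹' {c}).Infinite) :
    c ∈ subseqLimits conv u := by
  obtain ⟨σ, hσ, hσc⟩ := extraction_of_frequently_atTop (Nat.frequently_atTop_iff_infinite.2 hc)
  refine ⟨σ, hσ, ?_⟩
  convert h_const c using 1
  exact funext hσc

theorem mem_subseqLimits_of_frequently_mem_range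
    (h_sub : ∀ (x : ℕ → X) (a : X), conv x a →
      ∀ φ : ℕ → ℕ, StrictMono φ → conv (fun k => x (φ k)) a)
    {u v : ℕ → X} {a : X} (hfib : ∀ c, (u ⁻¹' {c}).Finite)
    (hfreq : ∃ᶠ m in atTop, u m ∈ range v) (ha : conv u a) :
    a ∈ subseqLimits conv v := by
  obtain ⟨σ, hσ, hσv⟩ := extraction_of_frequently_atTop hfreq
  obtain ⟨τ, ρ, hτ, hρ, hτρ⟩ := exists_comp_eq_comp_of_finite_fibers (u := u ∘ σ) hσv
    fun c => (hfib c).preimage (f := σ) hσ.injective.injOn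
  exact ⟨ρ, hρ, hτρ ▸ h_sub _ a (h_sub u a ha σ hσ) τ hτ⟩

theorem isLimitClosed_range_union_subseqLimits
    (h_unique : ∀ (x : ℕ → X) (a b : X), conv x a → conv x b → a = b)
    (h_const : ∀ a : X, conv (fun _ => a) a)
    (h_sub : ∀ (x : ℕ → X) (a : X), conv x a →
      ∀ φ : ℕ → ℕ, StrictMono φ → conv (fun k => x (φ k)) a)
    {v : ℕ → X} (hv : (subseqLimits conv v).Subsingleton) :
    IsLimitClosed conv (range v ∪ subseqLimits conv v) := by
  intro u hu a ha
  by_cases hfib : ∃ c, (u ⁻¹' {c}).Infinite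
  · obtain ⟨c, hc⟩ := hfib
    obtain ⟨m, hm⟩ := hc.nonempty
    have hac : c = a :=
      subseqLimits_subset_singleton h_unique h_sub ha (mem_subseqLimits_of_infinite_fiber h_const hc)
    exact hac ▸ hm ▸ hu m
  · simp only [not_exists, Set.not_infinite] at hfib
    have hlim_fin : (u ⁻¹' subseqLimits conv v).Finite := by
      rcases hv.eq_empty_or_singleton with h | ⟨ζ, h⟩
      · simp [h]
      · simpa [h] using hfib ζ
    have hfreq : ∃ᶠ m in atTop, u m ∈ range v := Nat.frequently_atTop_iff_infinite.2 <|
      hlim_fin.infinite_compl.mono fun m hm => (hu m).resolve_right hm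
    exact Or.inr (mem_subseqLimits_of_frequently_mem_range h_sub hfib hfreq ha)

theorem exists_subseq_subseqLimits_subsingleton
    (h_unique : ∀ (x : ℕ → X) (a b : X), conv x a → conv x b → a = b)
    (h_sub : ∀ (x : ℕ → X) (a : X), conv x a →
      ∀ φ : ℕ → ℕ, StrictMono φ → conv (fun k => x (φ k)) a)
    (y : ℕ → X) :
    ∃ σ : ℕ → ℕ, StrictMono σ ∧ (subseqLimits conv (y ∘ σ)).Subsingleton := by
  by_cases h : ∃ ζ, ζ ∈ subseqLimits conv y
  · obtain ⟨ζ, σ, hσ, hζ⟩ := h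
    exact ⟨σ, hσ, subsingleton_singleton.anti (subseqLimits_subset_singleton h_unique h_sub hζ)⟩
  · exact ⟨id, strictMono_id, fun a ha => absurd ⟨a, ha⟩ h⟩

theorem exists_subseq_forall_ne (h_const : ∀ a : X, conv (fun _ => a) a)
    {y : ℕ → X} {x₀ : X} (hx₀ : x₀ ∉ subseqLimits conv y) :
    ∃ σ : ℕ → ℕ, StrictMono σ ∧ ∀ k, y (σ k) ≠ x₀ := by
  have hfin : (y ⁻¹' {x₀}).Finite :=
    Set.not_infinite.1 fun h => hx₀ (mem_subseqLimits_of_infinite_fiber h_const h)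
  exact extraction_of_frequently_atTop (Nat.frequently_atTop_iff_infinite.2 hfin.infinite_compl)

end LConvergence

open LConvergence in
/-- KVPK recipe (Theorem A.4): for an `ℒ`-convergence on `𝒳` (unique limits,
constant sequences converge, stability under subsequences), a sequence converges
to `x₀` in the generated sequential topology (whose closed sets are the sets
closed under `⟶`-limits) iff every subsequence has a further subsequence
`⟶`-converging to `x₀`. -/
theorem stmt15 {X : Type*} (conv : (ℕ → X) → X → Prop)
    (h_unique : ∀ (x : ℕ → X) (a b : X), conv x a → conv x b → a = b)
    (h_const : ∀ a : X, conv (fun _ => a) a)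
    (h_sub : ∀ (x : ℕ → X) (a : X), conv x a →
      ∀ φ : ℕ → ℕ, StrictMono φ → conv (fun k => x (φ k)) a)
    (x : ℕ → X) (x₀ : X) :
    (∀ U : Set X,
      (∀ (y : ℕ → X), (∀ n, y n ∉ U) → ∀ y₀ : X, conv y y₀ → y₀ ∉ U) →
      x₀ ∈ U → ∃ N : ℕ, ∀ n ≥ N, x n ∈ U)
    ↔
    (∀ φ : ℕ → ℕ, StrictMono φ →
      ∃ ψ : ℕ → ℕ, StrictMono ψ ∧ conv (fun l => x (φ (ψ l))) x₀) := by
  constructor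
  · intro hL φ hφ
    by_contra! hcon
    have hx₀ : x₀ ∉ subseqLimits conv (x ∘ φ) := fun ⟨ψ, hψ, h⟩ => hcon ψ hψ h
    obtain ⟨σ, hσ, hne⟩ := exists_subseq_forall_ne h_const hx₀
    obtain ⟨τ, hτ, hsing⟩ := exists_subseq_subseqLimits_subsingleton h_unique h_sub (x ∘ φ ∘ σ)
    set F := range (x ∘ φ ∘ σ ∘ τ) ∪ subseqLimits conv (x ∘ φ ∘ σ ∘ τ)
    have hF : IsLimitClosed conv F :=
      isLimitClosed_range_union_subseqLimits h_unique h_const h_sub hsing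
    have hx₀F : x₀ ∉ F := by
      rintro (⟨k, hk⟩ | hk)
      · exact hne (τ k) hk
      · exact hx₀ (subseqLimits_comp_subset hσ (subseqLimits_comp_subset hτ hk))
    obtain ⟨N, hN⟩ := hL Fᶜ (fun u hu a ha => by simpa using hF u (by simpa using hu) a ha) hx₀F
    exact hN _ (hφ.comp (hσ.comp hτ)).le_apply (Or.inl ⟨N, rfl⟩)
  · intro hR U hU hx₀
    by_contra! h
    obtain ⟨φ, hφ, hφU⟩ := extraction_of_frequently_atTop (frequently_atTop.2 h)
    obtain ⟨ψ, hψ, hconv⟩ := hR φ hφ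
    exact hU _ (fun l => hφU (ψ l)) x₀ hconv hx₀
end

section
/- Addition is sequentially S-continuous (Section 4, item 7): If x_n →_S x_0 and y_n →_S y_0 in D([0,T]), then x_n + y_n →_S x_0 + y_0 (where addition is pointwise). -/
open MeasureTheory Filter Set Topology

noncomputable section

/-!
An `S`-approximant of `x_n + y_n` is the sum of `S`-approximants of `x_n` and `y_n`, so everything
reduces to the additivity of `v ↦ ∫ f dv` on `𝕍`. Every `v ∈ 𝕍` is represented by a signed measure:
extend `v` constantly outside `[0,T]`, take its Stieltjes vector measure restricted to `[0,T]`, and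
add an atom `v 0` at `0`. A representing measure is unique, since it is supported in `[0,T]` and
hence determined on the π-system of half-lines `(-∞, a]`. Additivity of the Jordan-decomposition
integral follows from `μ⁺ + N = P + μ⁻` whenever `μ = P - N`, all integrals being finite because
the measures live on the compact `[0,T]`.
-/

open Function

lemma eVariationOn_add_le {α E : Type*} [LinearOrder α] [SeminormedAddCommGroup E]
    (f g : α → E) (s : Set α) :
    eVariationOn (f + g) s ≤ eVariationOn f s + eVariationOn g s := by
  refine iSup_le fun ⟨n, u, hu, us⟩ => ?_
  calc ∑ i ∈ Finset.range n, edist ((f + g) (u (i + 1))) ((f + g) (u i))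
      ≤ ∑ i ∈ Finset.range n,
          (edist (f (u (i + 1))) (f (u i)) + edist (g (u (i + 1))) (g (u i))) :=
        Finset.sum_le_sum fun i _ => edist_add_add_le _ _ _ _
    _ = _ := Finset.sum_add_distrib
    _ ≤ _ := add_le_add (eVariationOn.sum_le hu us) (eVariationOn.sum_le hu us)

lemma BoundedVariationOn.add {α E : Type*} [LinearOrder α] [SeminormedAddCommGroup E]
    {f g : α → E} {s : Set α} (hf : BoundedVariationOn f s) (hg : BoundedVariationOn g s) :
    BoundedVariationOn (f + g) s :=
  ne_top_of_le_ne_top (ENNReal.add_ne_top.2 ⟨hf, hg⟩) (eVariationOn_add_le f g s)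

lemma Cadlag.add {T : ℝ} {x y : ℝ → ℝ} (hx : Cadlag T x) (hy : Cadlag T y) :
    Cadlag T (fun t => x t + y t) := by
  refine ⟨fun t ht => (hx.1 t ht).add (hy.1 t ht), fun t ht => ?_⟩
  obtain ⟨L, hL⟩ := hx.2 t ht
  obtain ⟨M, hM⟩ := hy.2 t ht
  exact ⟨L + M, hL.add hM⟩

lemma Cadlag.continuousWithinAt_Icc {T : ℝ} {v : ℝ → ℝ} (hv : Cadlag T v) {t : ℝ}
    (ht : t ∈ Icc 0 T) : ContinuousWithinAt v (Icc t T) t := by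
  rcases ht.2.lt_or_eq with htT | rfl
  · exact (continuousWithinAt_Ioi_iff_Ici.1 (hv.1 t ⟨ht.1, htT⟩)).mono Icc_subset_Ici_self
  · simp

lemma Cadlag.continuousWithinAt_comp_projIcc {T : ℝ} {v : ℝ → ℝ} (hv : Cadlag T v)
    (hT : 0 ≤ T) (t : ℝ) :
    ContinuousWithinAt (fun s => v (projIcc 0 T hT s)) (Ici t) t :=
  ContinuousWithinAt.comp (f := fun s => (projIcc 0 T hT s : ℝ))
    (hv.continuousWithinAt_Icc (projIcc 0 T hT t).2)
    (continuous_subtype_val.comp continuous_projIcc).continuousWithinAt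
    fun s (hs : t ≤ s) => ⟨monotone_projIcc hT hs, (projIcc 0 T hT s).2.2⟩

lemma MemV.add {T : ℝ} {a b : ℝ → ℝ} (ha : MemV T a) (hb : MemV T b) :
    MemV T (fun t => a t + b t) :=
  ⟨ha.1.add hb.1, BoundedVariationOn.add ha.2 hb.2⟩

lemma SignedMeasure.totalVariation_eq_zero_of_forall_subset {α : Type*} [MeasurableSpace α]
    {μ : SignedMeasure α} {A : Set α}
    (hA : MeasurableSet A) (h : ∀ s, MeasurableSet s → s ⊆ A → μ s = 0) :
    μ.totalVariation A = 0 := by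
  obtain ⟨i, hi, hpos, hneg, hP, hN⟩ := μ.toJordanDecomposition_spec
  simp [SignedMeasure.totalVariation, hP, hN, SignedMeasure.toMeasureOfZeroLE_apply _ hpos hi hA,
    SignedMeasure.toMeasureOfLEZero_apply _ hneg hi.compl hA,
    h _ (hi.inter hA) inter_subset_right, h _ (hi.compl.inter hA) inter_subset_right]

lemma sInt_eq_integral_sub_integral {μ : SignedMeasure ℝ} {P N : Measure ℝ}
    [IsFiniteMeasure P] [IsFiniteMeasure N] (hμ : μ = P.toSignedMeasure - N.toSignedMeasure)
    {f : ℝ → ℝ} (hP : Integrable f P) (hN : Integrable f N)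
    (hμf : Integrable f μ.totalVariation) :
    sInt μ f = ∫ t, f t ∂P - ∫ t, f t ∂N := by
  obtain ⟨hpos, hneg⟩ := integrable_add_measure.1 hμf
  have hmeas : μ.toJordanDecomposition.posPart + N = P + μ.toJordanDecomposition.negPart := by
    rw [← Measure.toSignedMeasure_eq_toSignedMeasure_iff, Measure.toSignedMeasure_add,
      Measure.toSignedMeasure_add, ← sub_eq_sub_iff_add_eq_add, ← hμ]
    exact μ.toSignedMeasure_toJordanDecomposition
  have hint := congrArg (fun κ => ∫ t, f t ∂κ) hmeas
  simp only [integral_add_measure hpos hN, integral_add_measure hP hneg] at hint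
  rw [sInt]
  linarith

lemma sInt_add {μ ν : SignedMeasure ℝ} {f : ℝ → ℝ} (hμ : Integrable f μ.totalVariation)
    (hν : Integrable f ν.totalVariation) (hμν : Integrable f (μ + ν).totalVariation) :
    sInt (μ + ν) f = sInt μ f + sInt ν f := by
  obtain ⟨hμp, hμn⟩ := integrable_add_measure.1 hμ
  obtain ⟨hνp, hνn⟩ := integrable_add_measure.1 hν
  have hsum : μ + ν =
      (μ.toJordanDecomposition.posPart + ν.toJordanDecomposition.posPart).toSignedMeasure -
        (μ.toJordanDecomposition.negPart + ν.toJordanDecomposition.negPart).toSignedMeasure := by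
    rw [Measure.toSignedMeasure_add, Measure.toSignedMeasure_add]
    conv_lhs => rw [← μ.toSignedMeasure_toJordanDecomposition,
      ← ν.toSignedMeasure_toJordanDecomposition]
    simp only [JordanDecomposition.toSignedMeasure]
    abel
  rw [sInt_eq_integral_sub_integral hsum (hμp.add_measure hνp) (hμn.add_measure hνn) hμν,
    integral_add_measure hμp hνp, integral_add_measure hμn hνn, sInt, sInt]
  ring

lemma Represents.add {T : ℝ} {μ ν : SignedMeasure ℝ} {a b : ℝ → ℝ}
    (hμ : Represents T μ a) (hν : Represents T ν b) :
    Represents T (μ + ν) (fun t => a t + b t) :=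
  ⟨fun t ht => by rw [add_apply, hμ.1 t ht, hν.1 t ht],
    fun s hs hsK => by rw [add_apply, hμ.2 s hs hsK, hν.2 s hs hsK, add_zero]⟩

lemma Represents.apply_inter_Icc {T : ℝ} {μ : SignedMeasure ℝ} {v : ℝ → ℝ}
    (h : Represents T μ v) {s : Set ℝ} (hs : MeasurableSet s) :
    μ (s ∩ Icc 0 T) = μ s := by
  rw [← VectorMeasure.of_add_of_sdiff (hs.inter measurableSet_Icc) hs inter_subset_left,
    h.2 _ (hs.diff (hs.inter measurableSet_Icc)) (by ext; simp; tauto), add_zero]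

lemma Represents.unique_s18 {T : ℝ} (hT : 0 ≤ T) {μ ν : SignedMeasure ℝ} {v : ℝ → ℝ}
    (hμ : Represents T μ v) (hν : Represents T ν v) : μ = ν := by
  have hIcc : ∀ t ∈ Icc 0 T, μ (Icc 0 t) = ν (Icc 0 t) := fun t ht => by
    rw [hμ.1 t ht, hν.1 t ht]
  refine VectorMeasure.ext_of_generateFrom (range Iic) ?_
    ((borel_eq_generateFrom_Iic ℝ) ▸ BorelSpace.measurable_eq) isPiSystem_Iic ?_
  · rintro _ ⟨a, rfl⟩
    rw [← hμ.apply_inter_Icc measurableSet_Iic, ← hν.apply_inter_Icc measurableSet_Iic]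
    rcases lt_or_ge a 0 with ha | ha
    · have hempty : Iic a ∩ Icc 0 T = ∅ := by
        ext
        simp only [mem_inter_iff, mem_Iic, mem_Icc, mem_empty_iff_false, iff_false]
        intro h
        linarith
      simp [hempty]
    · have hinter : Iic a ∩ Icc 0 T = Icc 0 (min a T) := by
        ext; simp only [mem_inter_iff, mem_Iic, mem_Icc, le_min_iff]; tauto
      rw [hinter]
      exact hIcc _ ⟨le_min ha hT, min_le_right a T⟩
  · rw [← hμ.apply_inter_Icc MeasurableSet.univ, ← hν.apply_inter_Icc MeasurableSet.univ,
      univ_inter]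
    exact hIcc T ⟨hT, le_rfl⟩

lemma Represents.integrable_totalVariation {T : ℝ} {μ : SignedMeasure ℝ} {v : ℝ → ℝ}
    (h : Represents T μ v) {f : ℝ → ℝ} (hf : Continuous f) : Integrable f μ.totalVariation := by
  have hnull : μ.totalVariation (Icc 0 T)ᶜ = 0 :=
    SignedMeasure.totalVariation_eq_zero_of_forall_subset measurableSet_Icc.compl
      fun s hs hsK => h.2 s hs (subset_compl_iff_disjoint_right.1 hsK).inter_eq
  rw [← Measure.restrict_eq_self_of_ae_mem (measure_eq_zero_iff_ae_notMem.1 hnull |>.mono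
    fun _ hx => not_not.1 hx)]
  exact hf.continuousOn.integrableOn_compact isCompact_Icc

lemma MemV.exists_represents {T : ℝ} (hT : 0 ≤ T) {v : ℝ → ℝ} (hv : MemV T v) :
    ∃ μ : SignedMeasure ℝ, Represents T μ v := by
  set G : ℝ → ℝ := fun s => v (projIcc 0 T hT s)
  have hG : BoundedVariationOn G univ :=
    ne_top_of_le_ne_top hv.2 <| eVariationOn.comp_le_of_monotoneOn v _
      (fun _ _ _ _ hst => monotone_projIcc hT hst) fun s _ => (projIcc 0 T hT s).2
  have hright : ∀ t ∈ Icc 0 T, rightLim G t = v t := fun t ht => by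
    rw [rightLim_eq_of_tendsto
      ((continuousWithinAt_Ioi_iff_Ici.2 (hv.1.continuousWithinAt_comp_projIcc hT t)))]
    simp [projIcc_of_mem hT ht]
  have hleft : leftLim G 0 = v 0 := by
    refine leftLim_eq_of_tendsto (tendsto_const_nhds.congr' ?_)
    filter_upwards [self_mem_nhdsWithin] with s hs
    simp [G, projIcc_of_le_left hT (le_of_lt hs)]
  -- `hG.vectorMeasure` gives `[0,t]` the mass `v t - v 0`; the Dirac mass supplies `v 0`.
  refine ⟨hG.vectorMeasure.restrict (Icc 0 T) + VectorMeasure.dirac 0 (v 0),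
    fun t ht => ?_, fun s hs hsK => ?_⟩
  · rw [add_apply, VectorMeasure.restrict_apply _ measurableSet_Icc measurableSet_Icc,
      inter_eq_left.2 (Icc_subset_Icc_right ht.2), hG.vectorMeasure_Icc ht.1, hright t ht, hleft,
      VectorMeasure.dirac_apply_of_mem measurableSet_Icc ⟨le_rfl, ht.1⟩]
    ring
  · have h0 : (0 : ℝ) ∉ s := fun h0 => (Set.eq_empty_iff_forall_notMem.1 hsK) 0 ⟨h0, le_rfl, hT⟩
    rw [add_apply, VectorMeasure.restrict_apply _ measurableSet_Icc hs, hsK,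
      VectorMeasure.empty, VectorMeasure.dirac_apply_of_notMem h0, add_zero]

lemma Represents.intD_eq_s18 {T : ℝ} (hT : 0 ≤ T) {μ : SignedMeasure ℝ} {v : ℝ → ℝ}
    (h : Represents T μ v) (f : ℝ → ℝ) : intD T f v = sInt μ f := by
  have hex : ∃ μ, Represents T μ v := ⟨μ, h⟩
  rw [intD, dif_pos hex, hex.choose_spec.unique_s18 hT h]

lemma intD_add {T : ℝ} (hT : 0 ≤ T) {a b : ℝ → ℝ} (ha : MemV T a) (hb : MemV T b)
    {f : ℝ → ℝ} (hf : Continuous f) :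
    intD T f (fun t => a t + b t) = intD T f a + intD T f b := by
  obtain ⟨μ, hμ⟩ := ha.exists_represents hT
  obtain ⟨ν, hν⟩ := hb.exists_represents hT
  rw [(hμ.add hν).intD_eq_s18 hT, hμ.intD_eq_s18 hT, hν.intD_eq_s18 hT]
  exact sInt_add (hμ.integrable_totalVariation hf) (hν.integrable_totalVariation hf)
    ((hμ.add hν).integrable_totalVariation hf)

theorem stmt18_general (T : ℝ) (hT : 0 < T) (x y : ℕ → ℝ → ℝ) (x₀ y₀ : ℝ → ℝ)
    (h1 : SConv T x x₀) (h2 : SConv T y y₀) :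
    SConv T (fun n t => x n t + y n t) (fun t => x₀ t + y₀ t) := by
  intro ε hε
  have add_close : ∀ {a b c d : ℝ}, |a - c| ≤ ε / 2 → |b - d| ≤ ε / 2 →
      |a + b - (c + d)| ≤ ε := fun {a b c d} hac hbd => by
    rw [add_sub_add_comm]
    linarith [abs_add_le (a - c) (b - d)]
  obtain ⟨v, v₀, hv, hv₀, hxv, hxv₀, hvlim⟩ := h1 (ε / 2) (half_pos hε)
  obtain ⟨w, w₀, hw, hw₀, hyw, hyw₀, hwlim⟩ := h2 (ε / 2) (half_pos hε)
  refine ⟨fun n t => v n t + w n t, fun t => v₀ t + w₀ t, fun n => (hv n).add (hw n),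
    hv₀.add hw₀, fun n t ht => add_close (hxv n t ht) (hyw n t ht),
    fun t ht => add_close (hxv₀ t ht) (hyw₀ t ht), fun f hf => ?_⟩
  simpa only [intD_add hT.le (hv _) (hw _) hf, intD_add hT.le hv₀ hw₀ hf]
    using (hvlim f hf).add (hwlim f hf)

/-- Addition is sequentially `S`-continuous (Section 4, item 7). -/
theorem stmt18 (T : ℝ) (hT : 0 < T) (x y : ℕ → ℝ → ℝ) (x₀ y₀ : ℝ → ℝ)
    (hx : ∀ n, Cadlag T (x n)) (hy : ∀ n, Cadlag T (y n))
    (hx₀ : Cadlag T x₀) (hy₀ : Cadlag T y₀)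
    (h1 : SConv T x x₀) (h2 : SConv T y y₀) :
    SConv T (fun n t => x n t + y n t) (fun t => x₀ t + y₀ t) :=
  stmt18_general T hT x y x₀ y₀ h1 h2

end
end
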